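/- arXiv:math/0501077 — 7 statements merged into one kernel-verified Lean document; each statement's English description precedes it below -/
import Mathlib

section
/- Let X be a compact metric space, r : X → X a continuous, surjective, finite-to-one map, and W : X → [0,∞) a measurable function with R_W 1 = 1 (i.e. ∑_{y ∈ r⁻¹(x)} W(y) = 1 for all x ∈ X). If V is a bounded measurable cocycle on the space of infinite paths, then the function h(x) = ∫_{Ω_x} V((z_n)_{n≥1}) dP_x((z_n)_{n≥1}) is a bounded function satisfying R_W h = h. -/
open MeasureTheory Filter Topology

/-- A path starting at `x`: a sequence `z 0, z 1, z 2, …` (representing `z_1, z_2, …`)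
with `r (z 0) = x` and `r (z (n+1)) = z n`. -/
def IsPathFrom {X : Type*} (r : X → X) (x : X) (z : ℕ → X) : Prop :=
  r (z 0) = x ∧ ∀ n, r (z (n + 1)) = z n

/-- The cylinder of paths starting at `x` whose first `n` entries agree with `z`. -/
def pathCylinder {X : Type*} (r : X → X) (x : X) (z : ℕ → X) (n : ℕ) : Set (ℕ → X) :=
  {w | IsPathFrom r x w ∧ ∀ i < n, w i = z i}

/-- The Ruelle transfer operator `R_W f (x) = ∑_{y ∈ r⁻¹(x)} W(y) f(y)`. -/
noncomputable def RuelleOp {X : Type*} (r : X → X) (W : X → ℝ) (f : X → ℝ) (x : X) : ℝ :=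
  ∑ᶠ y ∈ r ⁻¹' {x}, W y * f y

section Aux

variable {X : Type*}

/-- Prepend an element to a sequence. -/
def pcons (y : X) (w : ℕ → X) : ℕ → X := fun n => Nat.casesOn n y w

@[simp] lemma pcons_zero (y : X) (w : ℕ → X) : pcons y w 0 = y := rfl

@[simp] lemma pcons_succ (y : X) (w : ℕ → X) (n : ℕ) : pcons y w (n + 1) = w n := rfl

lemma measurable_pcons [MeasurableSpace X] (y : X) : Measurable (pcons y) := by
  rw [measurable_pi_iff]
  intro n
  cases n with
  | zero => exact measurable_const
  | succ n => exact measurable_pi_apply n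

lemma isPathFrom_pcons_iff {r : X → X} {x y : X} {w : ℕ → X} (hy : r y = x) :
    IsPathFrom r x (pcons y w) ↔ IsPathFrom r y w := by
  constructor
  · rintro ⟨-, h2⟩
    exact ⟨h2 0, fun n => h2 (n + 1)⟩
  · rintro ⟨h1, h2⟩
    refine ⟨hy, fun n => ?_⟩
    cases n with
    | zero => exact h1
    | succ n => exact h2 n

lemma isPathFrom_shift {r : X → X} {x : X} {z : ℕ → X} (hz : IsPathFrom r x z) :
    IsPathFrom r (z 0) (fun i => z (i + 1)) :=
  ⟨hz.2 0, fun n => hz.2 (n + 1)⟩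

/-- A canonical path starting at `y`, built from a section of `r`. -/
noncomputable def canonPath {r : X → X} (hr : Function.Surjective r) (y : X) : ℕ → X :=
  fun n => (Function.surjInv hr)^[n + 1] y

lemma isPathFrom_canonPath {r : X → X} (hr : Function.Surjective r) (y : X) :
    IsPathFrom r y (canonPath hr y) := by
  constructor
  · simp [canonPath, Function.surjInv_eq hr]
  · intro n
    have h1 : canonPath hr y (n + 1) = Function.surjInv hr (canonPath hr y n) := by
      simp [canonPath, Function.iterate_succ_apply']
    rw [h1, Function.surjInv_eq hr]

lemma path_iterate {r : X → X} {x : X} {w : ℕ → X} (hw : IsPathFrom r x w) :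
    ∀ j k, w j = r^[k] (w (j + k)) := by
  intro j k
  induction k with
  | zero => simp
  | succ k ih =>
    have h1 : r^[k + 1] (w (j + (k + 1))) = r^[k] (r (w ((j + k) + 1))) :=
      Function.iterate_succ_apply r k (w ((j + k) + 1))
    rw [h1, hw.2 (j + k)]
    exact ih

lemma path_reach {r : X → X} {x : X} {w : ℕ → X} (hw : IsPathFrom r x w) (i : ℕ) :
    r^[i + 1] (w i) = x := by
  have h := path_iterate hw 0 i
  simp only [Nat.zero_add] at h
  rw [Function.iterate_succ_apply' r i (w i), ← h]
  exact hw.1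

lemma reach_finite {r : X → X} (hfin : ∀ x : X, (r ⁻¹' {x}).Finite) (x : X) :
    ∀ i, {y : X | r^[i + 1] y = x}.Finite := by
  intro i
  induction i with
  | zero =>
    have h : {y : X | r^[0 + 1] y = x} = r ⁻¹' {x} := by
      ext y; simp
    rw [h]; exact hfin x
  | succ i ih =>
    have h : {y : X | r^[i + 1 + 1] y = x} = ⋃ z ∈ {y : X | r^[i + 1] y = x}, r ⁻¹' {z} := by
      ext y
      simp only [Set.mem_setOf_eq, Set.mem_iUnion, Set.mem_preimage, Set.mem_singleton_iff]
      constructor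
      · intro h
        exact ⟨r y, by rwa [Function.iterate_succ_apply] at h, rfl⟩
      · rintro ⟨z, hz, rfl⟩
        rwa [Function.iterate_succ_apply]
    rw [h]
    exact ih.biUnion fun z _ => hfin z

/-- A path from `x` passing through `y` at position `i`. -/
noncomputable def pthru {r : X → X} (hr : Function.Surjective r) (y : X) (i : ℕ) : ℕ → X :=
  fun j => if j ≤ i then r^[i - j] y else (Function.surjInv hr)^[j - i] y

lemma pthru_le {r : X → X} (hr : Function.Surjective r) (y : X) (i : ℕ) {j : ℕ} (hj : j ≤ i) :
    pthru hr y i j = r^[i - j] y := if_pos hj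

lemma pthru_self {r : X → X} (hr : Function.Surjective r) (y : X) (i : ℕ) :
    pthru hr y i i = y := by
  rw [pthru_le hr y i le_rfl]
  simp

lemma isPathFrom_pthru {r : X → X} (hr : Function.Surjective r) {x y : X} {i : ℕ}
    (hy : r^[i + 1] y = x) : IsPathFrom r x (pthru hr y i) := by
  constructor
  · rw [pthru_le hr y i (Nat.zero_le i)]
    simp only [Nat.sub_zero]
    rw [← Function.iterate_succ_apply' r i y]
    exact hy
  · intro n
    rcases lt_trichotomy n i with h | h | h
    · rw [pthru_le hr y i (Nat.succ_le_of_lt h), pthru_le hr y i h.le,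
        ← Function.iterate_succ_apply' r (i - (n + 1)) y]
      congr 1
      omega
    · subst h
      have h1 : pthru hr y n (n + 1) = Function.surjInv hr y := by
        simp [pthru]
      rw [h1, Function.surjInv_eq hr, pthru_self]
    · have h1 : pthru hr y i (n + 1) =
          Function.surjInv hr ((Function.surjInv hr)^[n - i] y) := by
        rw [pthru, if_neg (by omega : ¬ n + 1 ≤ i),
          show n + 1 - i = (n - i) + 1 by omega, Function.iterate_succ_apply']
      rw [h1, Function.surjInv_eq hr, pthru, if_neg (by omega : ¬ n ≤ i)]

variable [MetricSpace X] [CompactSpace X] [MeasurableSpace X] [BorelSpace X]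

lemma measurableSet_pathset {r : X → X} (hr : Continuous r) (x : X) :
    MeasurableSet {w : ℕ → X | IsPathFrom r x w} := by
  have h0 : MeasurableSet {w : ℕ → X | r (w 0) = x} :=
    (hr.measurable.comp (measurable_pi_apply 0)) (measurableSet_singleton x)
  have h1 : ∀ n, MeasurableSet {w : ℕ → X | r (w (n + 1)) = w n} := fun n =>
    ((hr.measurable.comp (measurable_pi_apply (n + 1))).stronglyMeasurable).measurableSet_eq_fun
      (measurable_pi_apply n).stronglyMeasurable
  have heq : {w : ℕ → X | IsPathFrom r x w}
      = {w : ℕ → X | r (w 0) = x} ∩ ⋂ n, {w : ℕ → X | r (w (n + 1)) = w n} := by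
    ext w
    simp only [Set.mem_setOf_eq, Set.mem_inter_iff, Set.mem_iInter, IsPathFrom]
  rw [heq]
  exact h0.inter (MeasurableSet.iInter h1)

lemma measurableSet_pathCylinder {r : X → X} (hr : Continuous r) (x : X) (z : ℕ → X) (n : ℕ) :
    MeasurableSet (pathCylinder r x z n) := by
  have heq : pathCylinder r x z n
      = {w : ℕ → X | IsPathFrom r x w} ∩ ⋂ i ∈ Finset.range n, {w : ℕ → X | w i = z i} := by
    ext w
    simp only [pathCylinder, Set.mem_setOf_eq, Set.mem_inter_iff, Set.mem_iInter,
      Finset.mem_range]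
  rw [heq]
  refine (measurableSet_pathset hr x).inter (MeasurableSet.biInter (Set.to_countable _)
    fun i _ => ?_)
  have h2 : {w : ℕ → X | w i = z i} = (fun w : ℕ → X => w i) ⁻¹' {z i} := rfl
  rw [h2]
  exact measurable_pi_apply i (measurableSet_singleton (z i))

lemma cyl_inter {r : X → X} {x : X} {z z' : ℕ → X} {n n' : ℕ} (h : n ≤ n')
    (hne : (pathCylinder r x z n ∩ pathCylinder r x z' n').Nonempty) :
    pathCylinder r x z n ∩ pathCylinder r x z' n' = pathCylinder r x z' n' := by
  obtain ⟨w, ⟨hw1, hw2⟩, ⟨hw1', hw2'⟩⟩ := hne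
  apply Set.inter_eq_right.mpr
  rintro v ⟨hv1, hv2⟩
  refine ⟨hv1, fun i hi => ?_⟩
  rw [hv2 i (lt_of_lt_of_le hi h), ← hw2' i (lt_of_lt_of_le hi h), hw2 i hi]

lemma isPiSystem_cyl (r : X → X) (x : X) :
    IsPiSystem {A : Set (ℕ → X) | ∃ z n, IsPathFrom r x z ∧ A = pathCylinder r x z n} := by
  rintro A ⟨z, n, hz, rfl⟩ B ⟨z', n', hz', rfl⟩ hne
  rcases le_total n n' with h | h
  · rw [cyl_inter h hne]
    exact ⟨z', n', hz', rfl⟩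
  · rw [Set.inter_comm, cyl_inter h (Set.inter_comm _ _ ▸ hne)]
    exact ⟨z, n, hz, rfl⟩

lemma trace_gen {r : X → X} (hr_surj : Function.Surjective r)
    (hr_fin : ∀ x : X, (r ⁻¹' {x}).Finite) (x : X)
    {A : Set (ℕ → X)} (hA : MeasurableSet A) :
    ∃ S, MeasurableSet[MeasurableSpace.generateFrom
        {A : Set (ℕ → X) | ∃ z n, IsPathFrom r x z ∧ A = pathCylinder r x z n}] S ∧
      A ∩ {w | IsPathFrom r x w} = S ∩ {w | IsPathFrom r x w} := by
  set m := MeasurableSpace.generateFrom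
    {A : Set (ℕ → X) | ∃ z n, IsPathFrom r x z ∧ A = pathCylinder r x z n} with hm_def
  set Ω := {w : ℕ → X | IsPathFrom r x w} with hΩ_def
  let D : MeasurableSpace (ℕ → X) :=
  { MeasurableSet' := fun A => ∃ S, MeasurableSet[m] S ∧ A ∩ Ω = S ∩ Ω
    measurableSet_empty := ⟨∅, MeasurableSet.empty, rfl⟩
    measurableSet_compl := by
      rintro A ⟨S, hS, hAS⟩
      refine ⟨Sᶜ, hS.compl, ?_⟩
      ext w
      have h1 : w ∈ A ∩ Ω ↔ w ∈ S ∩ Ω := by rw [hAS]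
      simp only [Set.mem_inter_iff, Set.mem_compl_iff] at h1 ⊢
      tauto
    measurableSet_iUnion := by
      intro f hf
      choose S hS hfS using hf
      refine ⟨⋃ i, S i, MeasurableSet.iUnion hS, ?_⟩
      rw [Set.iUnion_inter, Set.iUnion_inter]
      exact Set.iUnion_congr hfS }
  have hid : @Measurable (ℕ → X) (ℕ → X) D MeasurableSpace.pi id := by
    rw [measurable_pi_iff]
    intro i
    intro B hB
    show ∃ S, MeasurableSet[m] S ∧
      ((fun w : ℕ → X => id w i) ⁻¹' B) ∩ Ω = S ∩ Ω
    refine ⟨⋃ y ∈ {y : X | r^[i + 1] y = x} ∩ B,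
      pathCylinder r x (pthru hr_surj y i) (i + 1), ?_, ?_⟩
    · refine MeasurableSet.biUnion (((reach_finite hr_fin x i).inter_of_left B).countable)
        fun y hy => ?_
      rw [hm_def]
      exact MeasurableSpace.measurableSet_generateFrom
        ⟨pthru hr_surj y i, i + 1, isPathFrom_pthru hr_surj hy.1, rfl⟩
    · have hsub : (⋃ y ∈ {y : X | r^[i + 1] y = x} ∩ B,
          pathCylinder r x (pthru hr_surj y i) (i + 1)) ⊆ Ω := by
        rintro w hw
        simp only [Set.mem_iUnion] at hw
        obtain ⟨y, -, hw⟩ := hw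
        exact hw.1
      rw [Set.inter_eq_left.mpr hsub]
      ext w
      simp only [Set.mem_inter_iff, Set.mem_preimage, Set.mem_iUnion, Set.mem_setOf_eq, id]
      constructor
      · rintro ⟨hwB, hwΩ⟩
        refine ⟨w i, ⟨path_reach hwΩ i, hwB⟩, hwΩ, fun j hj => ?_⟩
        have hj' : j ≤ i := by omega
        rw [pthru_le hr_surj (w i) i hj']
        have h3 := path_iterate hwΩ j (i - j)
        rwa [show j + (i - j) = i by omega] at h3
      · rintro ⟨y, ⟨hyr, hyB⟩, hwΩ, hpref⟩
        refine ⟨?_, hwΩ⟩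
        have h4 : w i = y := by
          rw [hpref i (by omega), pthru_self]
        rwa [h4]
  exact hid hA

end Aux

theorem stmt0
    {X : Type*} [MetricSpace X] [CompactSpace X] [MeasurableSpace X] [BorelSpace X]
    (r : X → X) (hr_cont : Continuous r) (hr_surj : Function.Surjective r)
    (hr_fin : ∀ x : X, (r ⁻¹' {x}).Finite)
    (W : X → ℝ) (hW_meas : Measurable W) (hW_nonneg : ∀ x, 0 ≤ W x)
    (hW1 : ∀ x : X, (∑ᶠ y ∈ r ⁻¹' {x}, W y) = 1)
    -- the family of Kolmogorov path-space measures `P_x`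
    (P : X → Measure (ℕ → X)) (hP_prob : ∀ x, IsProbabilityMeasure (P x))
    (hP_cyl : ∀ (x : X) (z : ℕ → X) (n : ℕ), IsPathFrom r x z →
      P x (pathCylinder r x z n) = ∏ i ∈ Finset.range n, ENNReal.ofReal (W (z i)))
    -- `V` is a bounded measurable cocycle
    (V : (ℕ → X) → ℝ) (hV_meas : Measurable V) (hV_bdd : ∃ M : ℝ, ∀ z, |V z| ≤ M)
    (hV_cocycle : ∀ z : ℕ → X, (∀ n, r (z (n + 1)) = z n) →
      V z = V (fun n => z (n + 1))) :
    (∃ M : ℝ, ∀ x, |∫ z, V z ∂(P x)| ≤ M) ∧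
      ∀ x : X, RuelleOp r W (fun y => ∫ z, V z ∂(P y)) x = ∫ z, V z ∂(P x) := by
  classical
  obtain ⟨M, hM⟩ := hV_bdd
  have hInt : ∀ (μ : Measure (ℕ → X)) [IsFiniteMeasure μ], Integrable V μ := fun μ _ =>
    (integrable_const M).mono' hV_meas.aestronglyMeasurable
      (Filter.Eventually.of_forall fun z => by rw [Real.norm_eq_abs]; exact hM z)
  -- P y gives full mass to paths from y
  have hPΩ : ∀ y : X, (P y) {w | IsPathFrom r y w} = 1 := by
    intro y
    have h0 : pathCylinder r y (canonPath hr_surj y) 0 = {w | IsPathFrom r y w} := by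
      ext w
      simp [pathCylinder]
    rw [← h0, hP_cyl y _ 0 (isPathFrom_canonPath hr_surj y)]
    simp
  constructor
  · refine ⟨M, fun x => ?_⟩
    haveI := hP_prob x
    calc |∫ z, V z ∂P x| = ‖∫ z, V z ∂P x‖ := (Real.norm_eq_abs _).symm
      _ ≤ M * ((P x) Set.univ).toReal := norm_integral_le_of_norm_le_const
          (Filter.Eventually.of_forall fun z => by rw [Real.norm_eq_abs]; exact hM z)
      _ = M := by simp
  · intro x
    set C : Set (Set (ℕ → X)) :=
      {A : Set (ℕ → X) | ∃ z n, IsPathFrom r x z ∧ A = pathCylinder r x z n} with hC_def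
    set Ω := {w : ℕ → X | IsPathFrom r x w} with hΩ_def
    set T := (hr_fin x).toFinset with hT_def
    have hTmem : ∀ y, y ∈ T ↔ r y = x := by
      intro y
      rw [hT_def, Set.Finite.mem_toFinset]
      rfl
    have hWsum : ∑ y ∈ T, W y = 1 := by
      have h := hW1 x
      rwa [← (hr_fin x).coe_toFinset, finsum_mem_coe_finset] at h
    set Q : Measure (ℕ → X) := ∑ y ∈ T, (ENNReal.ofReal (W y)) • (P y).map (pcons y)
      with hQ_def
    have hQ_apply : ∀ {A : Set (ℕ → X)}, MeasurableSet A →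
        Q A = ∑ y ∈ T, ENNReal.ofReal (W y) * (P y) (pcons y ⁻¹' A) := by
      intro A hA
      rw [hQ_def, Measure.finset_sum_apply]
      refine Finset.sum_congr rfl fun y _ => ?_
      rw [Measure.smul_apply, Measure.map_apply (measurable_pcons y) hA, smul_eq_mul]
    have hcylQ : ∀ (z : ℕ → X) (n : ℕ), IsPathFrom r x z →
        Q (pathCylinder r x z n) = ∏ i ∈ Finset.range n, ENNReal.ofReal (W (z i)) := by
      intro z n hz
      rw [hQ_apply (measurableSet_pathCylinder hr_cont x z n)]
      cases n with
      | zero =>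
        have hpre : ∀ y ∈ T, ENNReal.ofReal (W y) * (P y) (pcons y ⁻¹' pathCylinder r x z 0)
            = ENNReal.ofReal (W y) := by
          intro y hy
          have hpre' : pcons y ⁻¹' pathCylinder r x z 0 = {w | IsPathFrom r y w} := by
            ext w
            simp [pathCylinder, Set.mem_preimage, isPathFrom_pcons_iff ((hTmem y).1 hy)]
          rw [hpre', hPΩ y, mul_one]
        rw [Finset.sum_congr rfl hpre,
          ← ENNReal.ofReal_sum_of_nonneg (fun y _ => hW_nonneg y), hWsum]
        simp
      | succ nn =>
        have hz0T : z 0 ∈ T := (hTmem _).2 hz.1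
        have hzero : ∀ y ∈ T, y ≠ z 0 →
            ENNReal.ofReal (W y) * (P y) (pcons y ⁻¹' pathCylinder r x z (nn + 1)) = 0 := by
          intro y _ hy
          have hempty : pcons y ⁻¹' pathCylinder r x z (nn + 1) = ∅ := by
            ext w
            simp only [Set.mem_preimage, pathCylinder, Set.mem_setOf_eq,
              Set.mem_empty_iff_false, iff_false, not_and]
            intro _ h2
            exact hy (h2 0 (Nat.succ_pos nn))
          rw [hempty]
          simp
        rw [Finset.sum_eq_single (z 0) hzero (fun h => absurd hz0T h)]
        have hmain : pcons (z 0) ⁻¹' pathCylinder r x z (nn + 1)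
            = pathCylinder r (z 0) (fun i => z (i + 1)) nn := by
          ext w
          simp only [Set.mem_preimage, pathCylinder, Set.mem_setOf_eq,
            isPathFrom_pcons_iff hz.1]
          constructor
          · rintro ⟨h1, h2⟩
            refine ⟨h1, fun i hi => ?_⟩
            exact h2 (i + 1) (by omega)
          · rintro ⟨h1, h2⟩
            refine ⟨h1, fun i hi => ?_⟩
            cases i with
            | zero => rfl
            | succ j => exact h2 j (by omega)
        rw [hmain, hP_cyl (z 0) _ nn (isPathFrom_shift hz), Finset.prod_range_succ']
        rw [mul_comm]
    have hQuniv : Q Set.univ = 1 := by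
      rw [hQ_apply MeasurableSet.univ]
      simp only [Set.preimage_univ]
      have h1 : ∀ y ∈ T, ENNReal.ofReal (W y) * (P y) Set.univ = ENNReal.ofReal (W y) := by
        intro y _
        haveI := hP_prob y
        simp
      rw [Finset.sum_congr rfl h1, ← ENNReal.ofReal_sum_of_nonneg (fun y _ => hW_nonneg y),
        hWsum, ENNReal.ofReal_one]
    have hm_le : MeasurableSpace.generateFrom C ≤ MeasurableSpace.pi := by
      refine MeasurableSpace.generateFrom_le ?_
      rintro A ⟨z, n, hz, rfl⟩
      exact measurableSet_pathCylinder hr_cont x z n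
    haveI := hP_prob x
    have hkey : ∀ S, MeasurableSet[MeasurableSpace.generateFrom C] S → P x S = Q S := by
      haveI hfin : IsFiniteMeasure ((P x).trim hm_le) := by
        constructor
        rw [trim_measurableSet_eq hm_le MeasurableSet.univ]
        simp
      have heq : (P x).trim hm_le = Q.trim hm_le := by
        refine @MeasureTheory.ext_of_generate_finite _ (MeasurableSpace.generateFrom C) _ _
          C rfl ?_ hfin ?_ ?_
        · rw [hC_def]
          exact isPiSystem_cyl r x
        · rintro A hAC
          have hAm : MeasurableSet[MeasurableSpace.generateFrom C] A :=
            MeasurableSpace.measurableSet_generateFrom hAC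
          rw [hC_def] at hAC
          obtain ⟨z, n, hz, rfl⟩ := hAC
          rw [trim_measurableSet_eq hm_le hAm, trim_measurableSet_eq hm_le hAm,
            hP_cyl x z n hz, hcylQ z n hz]
        · rw [trim_measurableSet_eq hm_le MeasurableSet.univ,
            trim_measurableSet_eq hm_le MeasurableSet.univ, hQuniv, measure_univ]
      intro S hS
      rw [← trim_measurableSet_eq hm_le hS, ← trim_measurableSet_eq hm_le hS, heq]
    have hΩm : MeasurableSet[MeasurableSpace.generateFrom C] Ω := by
      have hΩ_eq : Ω = pathCylinder r x (canonPath hr_surj x) 0 := by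
        ext w
        simp [hΩ_def, pathCylinder]
      rw [hΩ_eq]
      refine MeasurableSpace.measurableSet_generateFrom ?_
      rw [hC_def]
      exact ⟨_, 0, isPathFrom_canonPath hr_surj x, rfl⟩
    have hΩamb : MeasurableSet Ω := hm_le _ hΩm
    have hPxΩ : P x Ω = 1 := hPΩ x
    have hQΩ : Q Ω = 1 := by rw [← hkey Ω hΩm, hPxΩ]
    have hPnull : P x Ωᶜ = 0 := by
      rw [measure_compl hΩamb (measure_ne_top _ _), hPxΩ, measure_univ, tsub_self]
    have hQnull : Q Ωᶜ = 0 := by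
      haveI : IsFiniteMeasure Q := ⟨by rw [hQuniv]; exact ENNReal.one_lt_top⟩
      rw [measure_compl hΩamb (measure_ne_top Q _), hQuniv, hQΩ, tsub_self]
    have hPQ : P x = Q := by
      ext A hA
      obtain ⟨S, hSm, hAS⟩ := trace_gen hr_surj hr_fin x hA
      rw [← hC_def] at hSm
      have step : ∀ (μ : Measure (ℕ → X)), μ Ωᶜ = 0 → μ A = μ (A ∩ Ω) := by
        intro μ hμ
        have h1 := measure_inter_add_diff (μ := μ) A hΩamb
        have h0 : μ (A \ Ω) = 0 := measure_mono_null (fun w hw => hw.2) hμ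
        rw [h0, add_zero] at h1
        exact h1.symm
      rw [step _ hPnull, step _ hQnull, hAS]
      exact hkey _ (hSm.inter hΩm)
    have hRHS : ∫ z, V z ∂(P x) = ∑ y ∈ T, W y * ∫ z, V z ∂(P y) := by
      rw [hPQ, hQ_def]
      have hintall : ∀ y ∈ T, Integrable V ((ENNReal.ofReal (W y)) • (P y).map (pcons y)) := by
        intro y _
        haveI := hP_prob y
        haveI : IsProbabilityMeasure ((P y).map (pcons y)) :=
          Measure.isProbabilityMeasure_map (measurable_pcons y).aemeasurable
        haveI : IsFiniteMeasure ((ENNReal.ofReal (W y)) • (P y).map (pcons y)) := by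
          constructor
          rw [Measure.smul_apply, smul_eq_mul, measure_univ, mul_one]
          exact ENNReal.ofReal_lt_top
        exact hInt _
      rw [integral_finset_sum_measure hintall]
      refine Finset.sum_congr rfl fun y _ => ?_
      haveI := hP_prob y
      rw [integral_smul_measure, ENNReal.toReal_ofReal (hW_nonneg y), smul_eq_mul]
      congr 1
      rw [integral_map (measurable_pcons y).aemeasurable hV_meas.aestronglyMeasurable]
      refine integral_congr_ae ?_
      have hsub : {w : ℕ → X | ¬ V (pcons y w) = V w} ⊆ {w : ℕ → X | IsPathFrom r y w}ᶜ := by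
        intro w hw hwΩ
        apply hw
        have hc := hV_cocycle (pcons y w) ?_
        · have hfe : (fun n => pcons y w (n + 1)) = w := funext fun n => rfl
          rwa [hfe] at hc
        · intro n
          cases n with
          | zero => exact hwΩ.1
          | succ k => exact hwΩ.2 k
      have hnull : (P y) {w : ℕ → X | IsPathFrom r y w}ᶜ = 0 := by
        rw [measure_compl (measurableSet_pathset hr_cont y) (measure_ne_top _ _), hPΩ y,
          measure_univ, tsub_self]
      exact ae_iff.mpr (measure_mono_null hsub hnull)
    rw [hRHS]
    show (∑ᶠ y ∈ r ⁻¹' {x}, W y * ∫ z, V z ∂(P y)) = _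
    rw [← (hr_fin x).coe_toFinset, finsum_mem_coe_finset]
end

section
/- Let X be a compact metric space, r : X → X a continuous, surjective, finite-to-one map, and W a continuous nonnegative function on X with R_W 1 = 1, such that R_W f is continuous whenever f is continuous. Then a measure ν in the set M_inv of R_W-invariant probability measures is an extreme point of M_inv if and only if ν is ergodic with respect to r (i.e. every Borel set A with r⁻¹(A) = A has ν(A) ∈ {0,1}). -/
open MeasureTheory Filter Topology

/-- The set of `R_W`-invariant Borel probability measures. -/
def MinvSet {X : Type*} [MetricSpace X] [MeasurableSpace X]
    (r : X → X) (W : X → ℝ) : Set (Measure X) :=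
  {ν | IsProbabilityMeasure ν ∧ ∀ f : X → ℝ, Continuous f →
    (∫ x, RuelleOp r W f x ∂ν) = ∫ x, f x ∂ν}

/-!
For `μ ∈ M_inv` and continuous `f ≥ 0`, the identity `R_W (f · g ∘ r) = R_W f · g` shows that the
measures `(R_W f) μ` and `r_* (f μ)` integrate every continuous `g` alike, hence coincide; thus
`∫_B R_W f dμ = ∫_{r⁻¹ B} f dμ` for every Borel set `B`, and by linearity for every continuous `f`.
With `f = 1` this says that `μ` is `r`-invariant, and with `B` invariant it says that `M_inv` is
closed under conditioning on invariant sets. The rest is the usual argument for invariant measures: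
an invariant set `A` with `0 < ν A < 1` splits `ν` as `ν(A) ν[|A] + ν(Aᶜ) ν[|Aᶜ]`, while a component
of an ergodic `ν` is an invariant measure absolutely continuous with respect to `ν`, hence `ν`.
-/

open ProbabilityTheory

section General

variable {Ω : Type*} [MeasurableSpace Ω] {μ : Measure Ω}

theorem Continuous.integrable_of_compactSpace [TopologicalSpace Ω] [CompactSpace Ω]
    [OpensMeasurableSpace Ω] {f : Ω → ℝ} (hf : Continuous f) (μ : Measure Ω)
    [IsFiniteMeasure μ] : Integrable f μ :=
  hf.integrable_of_hasCompactSupport (.of_compactSpace f)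

theorem integral_withDensity_ofReal {f : Ω → ℝ} (hf : Measurable f) (hf0 : 0 ≤ f) (g : Ω → ℝ) :
    ∫ x, g x ∂μ.withDensity (fun x => ENNReal.ofReal (f x)) = ∫ x, f x * g x ∂μ := by
  rw [integral_withDensity_eq_integral_toReal_smul hf.ennreal_ofReal
    (.of_forall fun _ => ENNReal.ofReal_lt_top)]
  simp only [ENNReal.toReal_ofReal (hf0 _), smul_eq_mul]

theorem eq_smul_cond_add_smul_cond_compl [IsFiniteMeasure μ] {s : Set Ω} (hs : MeasurableSet s) :
    μ = (μ s).toNNReal • μ[|s] + (μ sᶜ).toNNReal • μ[|sᶜ] := by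
  ext t
  simp only [Measure.add_apply, Measure.smul_apply, ENNReal.smul_def, smul_eq_mul,
    ENNReal.coe_toNNReal (measure_ne_top _ _)]
  rw [mul_comm, mul_comm (μ sᶜ), cond_add_cond_compl_eq hs]

theorem cond_ne_cond_compl [IsFiniteMeasure μ] {s : Set Ω} (hs : MeasurableSet s)
    (hμs : μ s ≠ 0) : μ[|s] ≠ μ[|sᶜ] := fun h => by
  have := congrArg (· s) h
  simp [cond_apply_self hμs (measure_ne_top _ _), cond_apply hs.compl] at this

theorem absolutelyContinuous_nnreal_smul_add {ν : Measure Ω} {a : NNReal} (ha : a ≠ 0) :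
    μ ≪ a • μ + ν :=
  (Measure.absolutelyContinuous_smul (by exact_mod_cast ha)).add_right ν

theorem preErgodic_of_prob_eq_zero_or_one [IsProbabilityMeasure μ] {f : Ω → Ω}
    (h : ∀ s, MeasurableSet s → f ⁻¹' s = s → μ s = 0 ∨ μ s = 1) : PreErgodic f μ :=
  ⟨fun s hs hfs => eventuallyConst_set'.2 <| (h s hs hfs).imp ae_eq_empty.2
    fun h1 => ae_eq_univ.2 <| (prob_compl_eq_zero_iff hs).2 h1⟩

end General

section Algebra

variable {X : Type*} {r : X → X} {W : X → ℝ}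

theorem ruelleOp_one (hW1 : ∀ x : X, (∑ᶠ y ∈ r ⁻¹' {x}, W y) = 1) : RuelleOp r W 1 = 1 := by
  ext x
  simpa only [RuelleOp, Pi.one_apply, mul_one] using hW1 x

theorem ruelleOp_mul_comp (f g : X → ℝ) :
    RuelleOp r W (fun y => f y * g (r y)) = fun x => RuelleOp r W f x * g x := by
  ext x
  rw [RuelleOp, RuelleOp, finsum_mem_mul]
  refine finsum_mem_congr rfl fun y (hy : r y = x) => ?_
  rw [hy, mul_assoc]

theorem ruelleOp_sub (hr_fin : ∀ x : X, (r ⁻¹' {x}).Finite) (f g : X → ℝ) :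
    RuelleOp r W (f - g) = RuelleOp r W f - RuelleOp r W g := by
  ext x
  simp only [RuelleOp, Pi.sub_apply, mul_sub]
  exact finsum_mem_sub_distrib _ _ (hr_fin x)

theorem ruelleOp_nonneg (hW_nonneg : ∀ x, 0 ≤ W x) {f : X → ℝ} (hf : 0 ≤ f) :
    0 ≤ RuelleOp r W f := fun _ =>
  finsum_nonneg fun y => finsum_nonneg fun _ => mul_nonneg (hW_nonneg y) (hf y)

end Algebra

section Measure

variable {X : Type*} [MetricSpace X] [CompactSpace X] [MeasurableSpace X] [BorelSpace X]
  {r : X → X} {W : X → ℝ} {μ : Measure X}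

theorem withDensity_ruelleOp_eq_map (hr_cont : Continuous r) (hW_nonneg : ∀ x, 0 ≤ W x)
    (hμ : μ ∈ MinvSet r W) {f : X → ℝ} (hf : Continuous f) (hf0 : 0 ≤ f)
    (hRf : Continuous (RuelleOp r W f)) :
    μ.withDensity (fun x => ENNReal.ofReal (RuelleOp r W f x)) =
      (μ.withDensity fun x => ENNReal.ofReal (f x)).map r := by
  have := hμ.1
  have := isFiniteMeasure_withDensity_ofReal (hRf.integrable_of_compactSpace μ).2
  have := isFiniteMeasure_withDensity_ofReal (hf.integrable_of_compactSpace μ).2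
  refine ext_of_forall_integral_eq_of_IsFiniteMeasure fun g => ?_
  rw [integral_map hr_cont.aemeasurable g.continuous.aestronglyMeasurable,
    integral_withDensity_ofReal hRf.measurable (ruelleOp_nonneg hW_nonneg hf0),
    integral_withDensity_ofReal hf.measurable hf0,
    ← hμ.2 (fun y => f y * g (r y)) (by fun_prop), ruelleOp_mul_comp]

theorem setIntegral_ruelleOp_of_nonneg (hr_cont : Continuous r) (hW_nonneg : ∀ x, 0 ≤ W x)
    (hμ : μ ∈ MinvSet r W) {f : X → ℝ} (hf : Continuous f) (hf0 : 0 ≤ f)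
    (hRf : Continuous (RuelleOp r W f)) {B : Set X} (hB : MeasurableSet B) :
    ∫ x in B, RuelleOp r W f x ∂μ = ∫ x in r ⁻¹' B, f x ∂μ := by
  have hmass := congrArg (· B) (withDensity_ruelleOp_eq_map hr_cont hW_nonneg hμ hf hf0 hRf)
  rw [withDensity_apply _ hB, Measure.map_apply hr_cont.measurable hB,
    withDensity_apply _ (hr_cont.measurable hB)] at hmass
  rw [integral_eq_lintegral_of_nonneg_ae (.of_forall (ruelleOp_nonneg hW_nonneg hf0))
      hRf.aestronglyMeasurable,
    integral_eq_lintegral_of_nonneg_ae (.of_forall hf0) hf.aestronglyMeasurable, hmass]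

theorem setIntegral_ruelleOp (hr_cont : Continuous r) (hr_fin : ∀ x : X, (r ⁻¹' {x}).Finite)
    (hW_nonneg : ∀ x, 0 ≤ W x)
    (hRW_cont : ∀ f : X → ℝ, Continuous f → Continuous (RuelleOp r W f))
    (hμ : μ ∈ MinvSet r W) {f : X → ℝ} (hf : Continuous f) {B : Set X} (hB : MeasurableSet B) :
    ∫ x in B, RuelleOp r W f x ∂μ = ∫ x in r ⁻¹' B, f x ∂μ := by
  have := hμ.1
  set g : X → ℝ := fun x => max (f x) 0
  set h : X → ℝ := fun x => max (-f x) 0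
  have hg : Continuous g := by fun_prop
  have hh : Continuous h := by fun_prop
  have hRg := hRW_cont g hg
  have hRh := hRW_cont h hh
  have hfgh : f = g - h := funext fun x => (max_zero_sub_max_neg_zero_eq_self (f x)).symm
  rw [hfgh, ruelleOp_sub hr_fin]
  simp only [Pi.sub_apply]
  rw [integral_sub (hRg.integrable_of_compactSpace _) (hRh.integrable_of_compactSpace _),
    integral_sub (hg.integrable_of_compactSpace _) (hh.integrable_of_compactSpace _),
    setIntegral_ruelleOp_of_nonneg hr_cont hW_nonneg hμ hg (fun _ => le_max_right _ _) hRg hB,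
    setIntegral_ruelleOp_of_nonneg hr_cont hW_nonneg hμ hh (fun _ => le_max_right _ _) hRh hB]

theorem measurePreserving_of_mem_minvSet (hr_cont : Continuous r) (hW_nonneg : ∀ x, 0 ≤ W x)
    (hW1 : ∀ x : X, (∑ᶠ y ∈ r ⁻¹' {x}, W y) = 1) (hμ : μ ∈ MinvSet r W) :
    MeasurePreserving r μ μ := by
  have hR1 := ruelleOp_one hW1
  have h := withDensity_ruelleOp_eq_map hr_cont hW_nonneg hμ continuous_one zero_le_one
    (by rw [hR1]; exact continuous_one)
  simp only [hR1, Pi.one_apply, ENNReal.ofReal_one, withDensity_const, one_smul] at h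
  exact ⟨hr_cont.measurable, h.symm⟩

theorem cond_mem_minvSet (hr_cont : Continuous r) (hr_fin : ∀ x : X, (r ⁻¹' {x}).Finite)
    (hW_nonneg : ∀ x, 0 ≤ W x)
    (hRW_cont : ∀ f : X → ℝ, Continuous f → Continuous (RuelleOp r W f))
    (hμ : μ ∈ MinvSet r W) {A : Set X} (hA : MeasurableSet A) (hrA : r ⁻¹' A = A)
    (hμA : μ A ≠ 0) : μ[|A] ∈ MinvSet r W := by
  have := hμ.1
  refine ⟨cond_isProbabilityMeasure hμA, fun f hf => ?_⟩
  rw [ProbabilityTheory.cond, integral_smul_measure, integral_smul_measure,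
    setIntegral_ruelleOp hr_cont hr_fin hW_nonneg hRW_cont hμ hf hA, hrA]

end Measure

theorem stmt4_general
    {X : Type*} [MetricSpace X] [CompactSpace X] [MeasurableSpace X] [BorelSpace X]
    (r : X → X) (hr_cont : Continuous r)
    (hr_fin : ∀ x : X, (r ⁻¹' {x}).Finite)
    (W : X → ℝ) (hW_nonneg : ∀ x, 0 ≤ W x)
    (hW1 : ∀ x : X, (∑ᶠ y ∈ r ⁻¹' {x}, W y) = 1)
    (hRW_cont : ∀ f : X → ℝ, Continuous f → Continuous (RuelleOp r W f))
    (ν : Measure X) (hν : ν ∈ MinvSet r W) :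
    -- `ν` is an extreme point of `M_inv`
    (∀ ν₁ ∈ MinvSet r W, ∀ ν₂ ∈ MinvSet r W, ∀ a b : NNReal,
        0 < a → 0 < b → a + b = 1 → ν = a • ν₁ + b • ν₂ → ν₁ = ν₂)
    ↔
    -- if and only if `ν` is ergodic with respect to `r`
    (∀ A : Set X, MeasurableSet A → r ⁻¹' A = A → ν A = 0 ∨ ν A = 1) := by
  have := hν.1
  have hpres : ∀ μ ∈ MinvSet r W, MeasurePreserving r μ μ := fun _ =>
    measurePreserving_of_mem_minvSet hr_cont hW_nonneg hW1
  have hcond : ∀ A, MeasurableSet A → r ⁻¹' A = A → ν A ≠ 0 → ν[|A] ∈ MinvSet r W :=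
    fun _ => cond_mem_minvSet hr_cont hr_fin hW_nonneg hRW_cont hν
  constructor
  · intro hext A hA hrA
    by_contra! hA01
    obtain ⟨hA0, hA1⟩ := hA01
    have hAc0 : ν Aᶜ ≠ 0 := by rwa [Ne, prob_compl_eq_zero_iff hA]
    have hrAc : r ⁻¹' Aᶜ = Aᶜ := by rw [Set.preimage_compl, hrA]
    have hmass : (ν A).toNNReal + (ν Aᶜ).toNNReal = 1 := by
      rw [← ENNReal.toNNReal_add (measure_ne_top _ _) (measure_ne_top _ _),
        prob_add_prob_compl hA, ENNReal.toNNReal_one]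
    exact cond_ne_cond_compl hA hA0 <|
      hext _ (hcond A hA hrA hA0) _ (hcond Aᶜ hA.compl hrAc hAc0) _ _
        (ENNReal.toNNReal_pos hA0 (measure_ne_top _ _))
        (ENNReal.toNNReal_pos hAc0 (measure_ne_top _ _)) hmass
        (eq_smul_cond_add_smul_cond_compl hA)
  · intro herg ν₁ hν₁ ν₂ hν₂ a b ha hb _ hsum
    have hergodic : Ergodic r ν := ⟨hpres ν hν, preErgodic_of_prob_eq_zero_or_one herg⟩
    have := hν₁.1
    have := hν₂.1
    have h₁ : ν₁ = ν := hergodic.eq_of_absolutelyContinuous (hpres ν₁ hν₁)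
      (hsum ▸ absolutelyContinuous_nnreal_smul_add ha.ne')
    have h₂ : ν₂ = ν := hergodic.eq_of_absolutelyContinuous (hpres ν₂ hν₂)
      (hsum ▸ add_comm (b • ν₂) (a • ν₁) ▸ absolutelyContinuous_nnreal_smul_add hb.ne')
    rw [h₁, h₂]

theorem stmt4
    {X : Type*} [MetricSpace X] [CompactSpace X] [MeasurableSpace X] [BorelSpace X]
    (r : X → X) (hr_cont : Continuous r) (hr_surj : Function.Surjective r)
    (hr_fin : ∀ x : X, (r ⁻¹' {x}).Finite)
    (W : X → ℝ) (hW_cont : Continuous W) (hW_nonneg : ∀ x, 0 ≤ W x)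
    (hW1 : ∀ x : X, (∑ᶠ y ∈ r ⁻¹' {x}, W y) = 1)
    (hRW_cont : ∀ f : X → ℝ, Continuous f → Continuous (RuelleOp r W f))
    (ν : Measure X) (hν : ν ∈ MinvSet r W) :
    -- `ν` is an extreme point of `M_inv`
    (∀ ν₁ ∈ MinvSet r W, ∀ ν₂ ∈ MinvSet r W, ∀ a b : NNReal,
        0 < a → 0 < b → a + b = 1 → ν = a • ν₁ + b • ν₂ → ν₁ = ν₂)
    ↔
    -- if and only if `ν` is ergodic with respect to `r`
    (∀ A : Set X, MeasurableSet A → r ⁻¹' A = A → ν A = 0 ∨ ν A = 1) :=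
  stmt4_general r hr_cont hr_fin W hW_nonneg hW1 hRW_cont ν hν
end

section
/- Let X be a compact metric space and r : X → X continuous, surjective, finite-to-one, such that the backward orbit O⁻(x) = ⋃_{n≥1} r⁻ⁿ(x) of every point x ∈ X is dense in X. Suppose W is a continuous nonnegative function with R_W 1 = 1 which satisfies the TZ condition. If there exists a nonconstant continuous function h on X with R_W h = h, then there exists a W-cycle. -/
open MeasureTheory Filter Topology

/-- `x` lies on a cycle of `r`. -/
def OnCycle {X : Type*} (r : X → X) (x : X) : Prop :=
  ∃ n : ℕ, 0 < n ∧ r^[n] x = x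

/-- `C` is an `n`-cycle for `r` (for some `n ≥ 1`, the minimal period):
`C = {x, r x, …, r^[n-1] x}` with `r^[n] x = x`. -/
def IsCycle {X : Type*} (r : X → X) (C : Set X) : Prop :=
  ∃ (x : X) (n : ℕ), 0 < n ∧ r^[n] x = x ∧
    (∀ m : ℕ, 0 < m → r^[m] x = x → n ≤ m) ∧
    C = (fun k => r^[k] x) '' Set.Iio n

/-- A `W`-cycle: a cycle on which `W` is identically `1`. -/
def IsWCycle {X : Type*} (r : X → X) (W : X → ℝ) (C : Set X) : Prop :=
  IsCycle r C ∧ ∀ y ∈ C, W y = 1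

/-- The transversality-of-zeroes (TZ) condition. -/
def TZCondition {X : Type*} (r : X → X) (W : X → ℝ) : Prop :=
  -- (i) if `x` is not on a cycle then, for large `n`, `r⁻ⁿ(x)` contains no zero of `W`
  (∀ x : X, ¬OnCycle r x →
    ∃ nx : ℕ, ∀ n ≥ nx, ∀ y : X, r^[n] y = x → W y ≠ 0) ∧
  -- (ii) if `x₀, x₁` lie on a cycle with `x₁ ∈ r⁻¹(x₀)`, then every other
  -- `y ∈ r⁻¹(x₀)` is either not on a cycle or satisfies `W y = 0`
  (∀ x₀ x₁ : X, OnCycle r x₀ → OnCycle r x₁ → r x₁ = x₀ →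
    ∀ y : X, r y = x₀ → y ≠ x₁ → ¬OnCycle r y ∨ W y = 0)

theorem stmt7
    {X : Type*} [MetricSpace X] [CompactSpace X] [MeasurableSpace X] [BorelSpace X]
    (r : X → X) (hr_cont : Continuous r) (hr_surj : Function.Surjective r)
    (hr_fin : ∀ x : X, (r ⁻¹' {x}).Finite)
    -- the backward orbit of every point is dense
    (hdense : ∀ x : X, Dense {y : X | ∃ n : ℕ, 0 < n ∧ r^[n] y = x})
    (W : X → ℝ) (hW_cont : Continuous W) (hW_nonneg : ∀ x, 0 ≤ W x)
    (hW1 : ∀ x : X, (∑ᶠ y ∈ r ⁻¹' {x}, W y) = 1)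
    (hTZ : TZCondition r W)
    -- there is a nonconstant continuous harmonic function
    (h : X → ℝ) (hh_cont : Continuous h) (hh_harm : ∀ x, RuelleOp r W h x = h x)
    (hh_nonconst : ¬∀ x y : X, h x = h y) :
    ∃ C : Set X, IsWCycle r W C := by
  classical
  have hXne : Nonempty X := not_isEmpty_iff.mp (fun hE => hh_nonconst fun x _ => hE.elim x)
  obtain ⟨x₀, -, hmax'⟩ := isCompact_univ.exists_isMaxOn Set.univ_nonempty hh_cont.continuousOn
  have hmax : ∀ y : X, h y ≤ h x₀ := fun y => hmax' (Set.mem_univ y)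
  set M : ℝ := h x₀ with hM
  -- Finset versions of the sums
  have hsum1 : ∀ c : X, ∑ y ∈ (hr_fin c).toFinset, W y = 1 := by
    intro c
    rw [← finsum_mem_eq_finite_toFinset_sum W (hr_fin c)]
    exact hW1 c
  have hsum2 : ∀ c : X, ∑ y ∈ (hr_fin c).toFinset, W y * h y = h c := by
    intro c
    rw [← finsum_mem_eq_finite_toFinset_sum _ (hr_fin c)]
    exact hh_harm c
  -- extremum propagation: if h c = M and W y > 0 with r y = c, then h y = M
  have hext : ∀ c : X, h c = M → ∀ y : X, r y = c → W y ≠ 0 → h y = M := by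
    intro c hc y hyc hWy
    have hmem : y ∈ (hr_fin c).toFinset := by
      rw [Set.Finite.mem_toFinset]; exact hyc
    have hzero : ∑ z ∈ (hr_fin c).toFinset, W z * (M - h z) = 0 := by
      have heq : ∑ z ∈ (hr_fin c).toFinset, W z * (M - h z)
          = (∑ z ∈ (hr_fin c).toFinset, W z) * M - ∑ z ∈ (hr_fin c).toFinset, W z * h z := by
        rw [Finset.sum_mul, ← Finset.sum_sub_distrib]
        apply Finset.sum_congr rfl
        intro z _; ring
      rw [heq, hsum1 c, hsum2 c, hc]; ring
    have hterm : ∀ z ∈ (hr_fin c).toFinset, W z * (M - h z) = 0 := by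
      rw [← Finset.sum_eq_zero_iff_of_nonneg]
      · exact hzero
      · intro z _
        exact mul_nonneg (hW_nonneg z) (by linarith [hmax z])
    have := hterm y hmem
    rcases mul_eq_zero.mp this with h1 | h1
    · exact absurd h1 hWy
    · linarith
  -- existence of a positive-weight preimage staying at level M
  have hstep : ∀ c : X, h c = M → ∃ y : X, r y = c ∧ W y ≠ 0 ∧ h y = M := by
    intro c hc
    by_contra hno
    push_neg at hno
    have : ∑ y ∈ (hr_fin c).toFinset, W y = 0 := by
      apply Finset.sum_eq_zero
      intro y hy
      rw [Set.Finite.mem_toFinset] at hy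
      by_contra hWy
      exact (hno y hy hWy) (hext c hc y hy hWy)
    rw [hsum1 c] at this
    norm_num at this
  -- Key Lemma A: a maximizer not on a cycle is impossible
  have keyA : ∀ x : X, h x = M → ¬OnCycle r x → False := by
    intro x hx hnc
    obtain ⟨nx, hnx⟩ := hTZ.1 x hnc
    choose g hg1 hg2 hg3 using fun z : {z : X // h z = M} => hstep z.1 z.2
    set G : {z : X // h z = M} → {z : X // h z = M} := fun z => ⟨g z, hg3 z⟩ with hG
    have hGiter : ∀ n : ℕ, ∀ z : {z : X // h z = M}, r^[n] (G^[n] z).1 = z.1 := by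
      intro n
      induction n with
      | zero => intro z; rfl
      | succ n ih =>
        intro z
        rw [Function.iterate_succ_apply G, Function.iterate_succ_apply' r]
        rw [ih (G z)]
        exact hg1 z
    set z : X := (G^[nx] ⟨x, hx⟩).1 with hzdef
    have hz1 : r^[nx] z = x := hGiter nx ⟨x, hx⟩
    have hzM : h z = M := (G^[nx] ⟨x, hx⟩).2
    have claim : ∀ m : ℕ, ∀ y : X, r^[m] y = z → h y = M := by
      intro m
      induction m with
      | zero => intro y hy; rw [Function.iterate_zero_apply] at hy; rw [hy]; exact hzM
      | succ m ih =>
        intro y hy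
        rw [Function.iterate_succ_apply] at hy
        have hy' : h (r y) = M := ih (r y) hy
        have hW : W y ≠ 0 := by
          apply hnx (nx + (m + 1)) (Nat.le_add_right _ _) y
          rw [Function.iterate_add_apply r nx (m + 1) y, Function.iterate_succ_apply,
            hy, hz1]
        exact hext (r y) hy' y rfl hW
    have hEall : ∀ a : X, h a = M := by
      have hsub : {y : X | ∃ n : ℕ, 0 < n ∧ r^[n] y = z} ⊆ {y : X | h y = M} := by
        rintro y ⟨n, _, hn⟩
        exact claim n y hn
      have hclosed : IsClosed {y : X | h y = M} := isClosed_eq hh_cont continuous_const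
      intro a
      have : a ∈ closure {y : X | ∃ n : ℕ, 0 < n ∧ r^[n] y = z} := (hdense z) a
      have : a ∈ closure {y : X | h y = M} := closure_mono hsub this
      rwa [hclosed.closure_eq] at this
    exact hh_nonconst fun a b => by rw [hEall a, hEall b]
  -- x₀ lies on a cycle
  have hx₀M : h x₀ = M := rfl
  have hcyc₀ : OnCycle r x₀ := by
    by_contra hnc
    exact keyA x₀ hx₀M hnc
  -- minimal period
  have hex : ∃ n : ℕ, 0 < n ∧ r^[n] x₀ = x₀ := hcyc₀
  set p : ℕ := Nat.find hex with hpdef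
  obtain ⟨hp1, hp2⟩ := Nat.find_spec hex
  have hmin : ∀ m : ℕ, 0 < m → r^[m] x₀ = x₀ → p ≤ m := fun m h1 h2 =>
    Nat.find_min' hex ⟨h1, h2⟩
  have hOnIter : ∀ k : ℕ, OnCycle r (r^[k] x₀) := by
    intro k
    refine ⟨p, hp1, ?_⟩
    rw [← Function.iterate_add_apply, Nat.add_comm, Function.iterate_add_apply, hp2]
  -- Key Lemma B
  have keyB : ∀ c pc : X, h c = M → r pc = c → OnCycle r c → OnCycle r pc →
      W pc = 1 ∧ h pc = M := by
    intro c pc hc hpc hcycc hcycpc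
    have hpcmem : pc ∈ (hr_fin c).toFinset := by
      rw [Set.Finite.mem_toFinset]; exact hpc
    have hothers : ∀ y ∈ (hr_fin c).toFinset, y ≠ pc → W y = 0 := by
      intro y hy hne
      rw [Set.Finite.mem_toFinset] at hy
      by_contra hWy
      have hyM : h y = M := hext c hc y hy hWy
      rcases hTZ.2 c pc hcycc hcycpc hpc y hy hne with hnc | hW0
      · exact keyA y hyM hnc
      · exact hWy hW0
    have hWsum : ∑ y ∈ (hr_fin c).toFinset, W y = W pc :=
      Finset.sum_eq_single_of_mem pc hpcmem (fun y hy hne => hothers y hy hne)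
    have hWpc : W pc = 1 := by rw [← hWsum]; exact hsum1 c
    have hsum3 : ∑ y ∈ (hr_fin c).toFinset, W y * h y = W pc * h pc :=
      Finset.sum_eq_single_of_mem pc hpcmem
        (fun y hy hne => by rw [hothers y hy hne, zero_mul])
    have hpcM : h pc = M := by
      have hs2 := hsum2 c
      rw [hsum3, hWpc, one_mul, hc] at hs2
      exact hs2
    exact ⟨hWpc, hpcM⟩
  -- going around the cycle
  have hcycall : ∀ j : ℕ, j ≤ p → h (r^[p - j] x₀) = M ∧ (0 < j → W (r^[p - j] x₀) = 1) := by
    intro j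
    induction j with
    | zero =>
      intro _
      constructor
      · rw [Nat.sub_zero, hp2]
      · intro h0; exact absurd h0 (lt_irrefl 0)
    | succ j ih =>
      intro hj
      have hjp : j < p := Nat.lt_of_succ_le hj
      have ihj := ih (Nat.le_of_lt hjp)
      have hstepc : r (r^[p - (j + 1)] x₀) = r^[p - j] x₀ := by
        have : p - j = (p - (j + 1)) + 1 := by omega
        rw [this, Function.iterate_succ_apply' r]
      obtain ⟨hW1', hM'⟩ := keyB (r^[p - j] x₀) (r^[p - (j + 1)] x₀) ihj.1 hstepc
        (hOnIter _) (hOnIter _)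
      exact ⟨hM', fun _ => hW1'⟩
  refine ⟨(fun k => r^[k] x₀) '' Set.Iio p, ⟨x₀, p, hp1, hp2, hmin, rfl⟩, ?_⟩
  rintro y ⟨k, hk, rfl⟩
  have hk' : k < p := hk
  have hj : p - (p - k) = k := by omega
  have := (hcycall (p - k) (Nat.sub_le _ _)).2 (by omega)
  rwa [hj] at this
end

section
/- Let X be a compact metric space and r : X → X continuous, surjective, finite-to-one. Assume W is a continuous nonnegative function with R_W 1 = 1 which satisfies the TZ condition. Let h ∈ C(X) be nonnegative with R_W h = h. Then either there exists some x ∈ X such that h vanishes identically on the backward orbit O⁻(x) = ⋃_{n≥1} r⁻ⁿ(x), or every zero of h is a point lying on some W-cycle. -/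
open MeasureTheory Filter Topology

/-!
Harmonicity makes every term of `∑_{r y = x} W y h y = h x` vanish at a zero `x` of `h`, so
zeroes of `h` propagate to preimages of nonzero weight; since `R_W 1 = 1` such a preimage always
exists. If a zero `x₀` of `h` were not on a cycle, pulling it back `N` times along such preimages
(`N` as in TZ(i) for `x₀`) gives a zero `z`; a point `y` above `z` with `h y ≠ 0` must meet a
point of weight zero on its way down to `z`, at depth at least `N` above `x₀`, contradicting
TZ(i).
Once all zeroes lie on cycles, TZ(ii) kills the weight of every other preimage of a zero `c`
lying on a cycle, so the cycle predecessor `c'` of `c` carries all the weight: `W c' = 1` and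
`h c' = 0`. Going backwards around the cycle, it is a `W`-cycle.
-/

open Function

theorem Set.Finite.finsum_mem_eq_zero_iff_of_nonneg {α M : Type*} [AddCommMonoid M]
    [PartialOrder M] [IsOrderedAddMonoid M] {s : Set α} (hs : s.Finite) {f : α → M}
    (hf : ∀ i ∈ s, 0 ≤ f i) : ∑ᶠ i ∈ s, f i = 0 ↔ ∀ i ∈ s, f i = 0 := by
  rw [finsum_mem_eq_finite_toFinset_sum _ hs,
    Finset.sum_eq_zero_iff_of_nonneg (by simpa using hf)]
  simp

theorem finsum_mem_eq_single {α M : Type*} [AddCommMonoid M] {s : Set α} {f : α → M} {a : α}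
    (ha : a ∈ s) (hf : ∀ x ∈ s, x ≠ a → f x = 0) : ∑ᶠ x ∈ s, f x = f a := by
  have hfin : (s \ {a} ∩ f.support).Finite :=
    Set.finite_empty.subset fun x ⟨⟨hxs, hxa⟩, hfx⟩ => hfx (hf x hxs hxa)
  rw [← Set.insert_eq_of_mem ha, ← Set.insert_sdiff_singleton,
    finsum_mem_insert' f (by simp) hfin,
    finsum_mem_of_eqOn_zero fun x hx => hf x hx.1 hx.2, add_zero]

section OnCycle

variable {X : Type*} {r : X → X} {x : X}

theorem onCycle_iff_mem_periodicPts : OnCycle r x ↔ x ∈ periodicPts r :=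
  Iff.rfl

theorem OnCycle.iterate (hx : OnCycle r x) (k : ℕ) : OnCycle r (r^[k] x) :=
  let ⟨n, hn, hnx⟩ := hx
  ⟨n, hn, IsPeriodicPt.apply_iterate hnx k⟩

theorem OnCycle.minimalPeriod_pos (hx : OnCycle r x) : 0 < minimalPeriod r x :=
  minimalPeriod_pos_of_mem_periodicPts (onCycle_iff_mem_periodicPts.mp hx)

theorem isCycle_iterate_image_Iio_minimalPeriod (hx : OnCycle r x) :
    IsCycle r ((fun k => r^[k] x) '' Set.Iio (minimalPeriod r x)) :=
  ⟨x, minimalPeriod r x, hx.minimalPeriod_pos, isPeriodicPt_minimalPeriod r x,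
    fun _ => IsPeriodicPt.minimalPeriod_le, rfl⟩

end OnCycle

def VanishesOnBackwardOrbit {X : Type*} (r : X → X) (h : X → ℝ) (x : X) : Prop :=
  ∀ y : X, (∃ n : ℕ, 0 < n ∧ r^[n] y = x) → h y = 0

namespace RuelleOp

variable {X : Type*} {r : X → X} {W h : X → ℝ}

theorem exists_preimage_weight_ne_zero (hW1 : ∀ x : X, (∑ᶠ y ∈ r ⁻¹' {x}, W y) = 1)
    (x : X) : ∃ y, r y = x ∧ W y ≠ 0 :=
  exists_ne_zero_of_finsum_mem_ne_zero (s := r ⁻¹' {x}) (by rw [hW1 x]; exact one_ne_zero)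

theorem eq_zero_of_apply_eq_zero (hr_fin : ∀ x : X, (r ⁻¹' {x}).Finite)
    (hW_nonneg : ∀ x, 0 ≤ W x) (hh_nonneg : ∀ x, 0 ≤ h x)
    (hh_harm : ∀ x, RuelleOp r W h x = h x) {y : X} (hy : h (r y) = 0) (hWy : W y ≠ 0) :
    h y = 0 := by
  have hterms := ((hr_fin (r y)).finsum_mem_eq_zero_iff_of_nonneg
    fun z _ => mul_nonneg (hW_nonneg z) (hh_nonneg z)).mp ((hh_harm (r y)).trans hy)
  exact (mul_eq_zero.mp (hterms y rfl)).resolve_left hWy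

theorem eq_zero_of_iterate_eq_zero (hr_fin : ∀ x : X, (r ⁻¹' {x}).Finite)
    (hW_nonneg : ∀ x, 0 ≤ W x) (hh_nonneg : ∀ x, 0 ≤ h x)
    (hh_harm : ∀ x, RuelleOp r W h x = h x) {n : ℕ} {y : X} (hy : h (r^[n] y) = 0)
    (hW : ∀ k < n, W (r^[k] y) ≠ 0) : h y = 0 := by
  induction n generalizing y with
  | zero => exact hy
  | succ n ih =>
    have hry : h (r y) = 0 := ih hy fun k hk => hW (k + 1) (by omega)
    exact eq_zero_of_apply_eq_zero hr_fin hW_nonneg hh_nonneg hh_harm hry (hW 0 n.succ_pos)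

theorem onCycle_of_eq_zero (hr_fin : ∀ x : X, (r ⁻¹' {x}).Finite)
    (hW_nonneg : ∀ x, 0 ≤ W x) (hW1 : ∀ x : X, (∑ᶠ y ∈ r ⁻¹' {x}, W y) = 1)
    (hTZ : TZCondition r W) (hh_nonneg : ∀ x, 0 ≤ h x)
    (hh_harm : ∀ x, RuelleOp r W h x = h x) (hO : ∀ x, ¬VanishesOnBackwardOrbit r h x)
    {x₀ : X} (hx₀ : h x₀ = 0) : OnCycle r x₀ := by
  by_contra hx₀_cyc
  obtain ⟨N, hN⟩ := hTZ.1 x₀ hx₀_cyc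
  choose g hrg hWg using exists_preimage_weight_ne_zero hW1
  have hg_zero : ∀ n, h (g^[n] x₀) = 0 := by
    intro n
    induction n with
    | zero => exact hx₀
    | succ n ih =>
      rw [iterate_succ_apply']
      exact eq_zero_of_apply_eq_zero hr_fin hW_nonneg hh_nonneg hh_harm (by rwa [hrg]) (hWg _)
  obtain ⟨y, ⟨n, hn, hyn⟩, hy⟩ := by
    simpa only [VanishesOnBackwardOrbit, not_forall] using hO (g^[N] x₀)
  obtain ⟨j, hj, hWj⟩ : ∃ j < n, W (r^[j] y) = 0 := by
    by_contra! hW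
    exact hy (eq_zero_of_iterate_eq_zero hr_fin hW_nonneg hh_nonneg hh_harm
      (by rw [hyn]; exact hg_zero N) hW)
  refine hN (N + (n - j)) (by omega) (r^[j] y) ?_ hWj
  rw [iterate_add_apply, ← iterate_add_apply r (n - j), Nat.sub_add_cancel hj.le, hyn,
    LeftInverse.iterate hrg N x₀]

theorem weight_eq_one_and_eq_zero_of_apply_eq_zero (hr_fin : ∀ x : X, (r ⁻¹' {x}).Finite)
    (hW_nonneg : ∀ x, 0 ≤ W x) (hW1 : ∀ x : X, (∑ᶠ y ∈ r ⁻¹' {x}, W y) = 1)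
    (hTZ : TZCondition r W) (hh_nonneg : ∀ x, 0 ≤ h x)
    (hh_harm : ∀ x, RuelleOp r W h x = h x) (hzero : ∀ x, h x = 0 → OnCycle r x)
    {c' : X} (hc' : OnCycle r c') (hc : h (r c') = 0) : W c' = 1 ∧ h c' = 0 := by
  have hothers : ∀ y ∈ r ⁻¹' {r c'}, y ≠ c' → W y = 0 := by
    intro y hy hyc'
    by_contra hWy
    have hy_zero : h y = 0 :=
      eq_zero_of_apply_eq_zero hr_fin hW_nonneg hh_nonneg hh_harm (by rwa [hy]) hWy
    exact (hTZ.2 _ c' (hzero _ hc) hc' rfl y hy hyc').elim (· (hzero y hy_zero)) hWy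
  have hWc' : W c' = 1 :=
    (finsum_mem_eq_single (s := r ⁻¹' {r c'}) rfl hothers).symm.trans (hW1 (r c'))
  exact ⟨hWc', eq_zero_of_apply_eq_zero hr_fin hW_nonneg hh_nonneg hh_harm hc (by simp [hWc'])⟩

theorem weight_iterate_eq_one_of_eq_zero (hr_fin : ∀ x : X, (r ⁻¹' {x}).Finite)
    (hW_nonneg : ∀ x, 0 ≤ W x) (hW1 : ∀ x : X, (∑ᶠ y ∈ r ⁻¹' {x}, W y) = 1)
    (hTZ : TZCondition r W) (hh_nonneg : ∀ x, 0 ≤ h x)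
    (hh_harm : ∀ x, RuelleOp r W h x = h x) (hzero : ∀ x, h x = 0 → OnCycle r x)
    {x : X} (hx : h x = 0) (k : ℕ) : W (r^[k] x) = 1 := by
  have hx_cyc := hzero x hx
  have hstep : ∀ j, h (r^[j + 1] x) = 0 → W (r^[j] x) = 1 ∧ h (r^[j] x) = 0 := fun j hj =>
    weight_eq_one_and_eq_zero_of_apply_eq_zero hr_fin hW_nonneg hW1 hTZ hh_nonneg hh_harm hzero
      (hx_cyc.iterate j) (by rwa [← iterate_succ_apply' r j])
  obtain ⟨p, hp, hpx⟩ := hx_cyc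
  -- `r^[p * (k + 1)] x = x`, and zeroes propagate backwards from there down to `r^[k + 1] x`.
  have hzero_iter : ∀ j ≤ p * (k + 1), h (r^[j] x) = 0 := fun j hj =>
    Nat.decreasingInduction (fun i _ hi => (hstep i hi).2)
      (by rwa [iterate_mul, iterate_fixed hpx]) hj
  exact (hstep k (hzero_iter (k + 1) (Nat.le_mul_of_pos_left _ hp))).1

end RuelleOp

theorem stmt8_general
    {X : Type*}
    (r : X → X)
    (hr_fin : ∀ x : X, (r ⁻¹' {x}).Finite)
    (W : X → ℝ) (hW_nonneg : ∀ x, 0 ≤ W x)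
    (hW1 : ∀ x : X, (∑ᶠ y ∈ r ⁻¹' {x}, W y) = 1)
    (hTZ : TZCondition r W)
    (h : X → ℝ) (hh_nonneg : ∀ x, 0 ≤ h x)
    (hh_harm : ∀ x, RuelleOp r W h x = h x) :
    -- either `h` vanishes identically on a backward orbit `O⁻(x)`,
    (∃ x : X, ∀ y : X, (∃ n : ℕ, 0 < n ∧ r^[n] y = x) → h y = 0) ∨
    -- or every zero of `h` lies on some `W`-cycle
    (∀ x : X, h x = 0 → ∃ C : Set X, IsWCycle r W C ∧ x ∈ C) := by
  by_cases hO : ∃ x, VanishesOnBackwardOrbit r h x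
  · exact .inl hO
  refine .inr fun x hx => ?_
  have hzero : ∀ y, h y = 0 → OnCycle r y := fun _ =>
    RuelleOp.onCycle_of_eq_zero hr_fin hW_nonneg hW1 hTZ hh_nonneg hh_harm (not_exists.mp hO)
  refine ⟨_, ⟨isCycle_iterate_image_Iio_minimalPeriod (hzero x hx), ?_⟩,
    ⟨0, (hzero x hx).minimalPeriod_pos, rfl⟩⟩
  rintro _ ⟨k, -, rfl⟩
  exact RuelleOp.weight_iterate_eq_one_of_eq_zero hr_fin hW_nonneg hW1 hTZ hh_nonneg hh_harm hzero
    hx k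

theorem stmt8
    {X : Type*} [MetricSpace X] [CompactSpace X] [MeasurableSpace X] [BorelSpace X]
    (r : X → X) (hr_cont : Continuous r) (hr_surj : Function.Surjective r)
    (hr_fin : ∀ x : X, (r ⁻¹' {x}).Finite)
    (W : X → ℝ) (hW_cont : Continuous W) (hW_nonneg : ∀ x, 0 ≤ W x)
    (hW1 : ∀ x : X, (∑ᶠ y ∈ r ⁻¹' {x}, W y) = 1)
    (hTZ : TZCondition r W)
    (h : X → ℝ) (hh_cont : Continuous h) (hh_nonneg : ∀ x, 0 ≤ h x)
    (hh_harm : ∀ x, RuelleOp r W h x = h x) :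
    -- either `h` vanishes identically on a backward orbit `O⁻(x)`,
    (∃ x : X, ∀ y : X, (∃ n : ℕ, 0 < n ∧ r^[n] y = x) → h y = 0) ∨
    -- or every zero of `h` lies on some `W`-cycle
    (∀ x : X, h x = 0 → ∃ C : Set X, IsWCycle r W C ∧ x ∈ C) :=
  stmt8_general r hr_fin W hW_nonneg hW1 hTZ h hh_nonneg hh_harm
end

section
/- Let X be a compact metric space, r : X → X continuous, surjective, finite-to-one, with the backward orbit of every point dense in X. Let W ∈ C(X) be nonnegative with R_W 1 = 1, with finitely many zeroes, and with no W-cycles. Suppose λ ∈ ℂ with |λ| = 1 and λ ≠ 1, and h ∈ C(X), h ≠ 0, satisfies R_W h = λ h. Then h = λ · (h ∘ r). If in addition r has at least one periodic point, then λ is a root of unity, and if p is the smallest positive integer with λ^p = 1, there exists a partition of X into disjoint compact open sets A_0, …, A_{p−1} such that r(A_k) = A_{k+1} for k ∈ {0,…,p−2}, r(A_{p−1}) = A_0, h is constant equal to h_k on A_k, and h_k = λ h_{k+1} for k ∈ {0,…,p−2}. -/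
open MeasureTheory Filter Topology

/-- The Ruelle transfer operator on complex-valued functions:
`R_W f (x) = ∑_{y ∈ r⁻¹(x)} W(y) f(y)`. -/
noncomputable def RuelleOpC {X : Type*} (r : X → X) (W : X → ℝ) (f : X → ℂ) (x : X) : ℂ :=
  ∑ᶠ y ∈ r ⁻¹' {x}, (W y : ℂ) * f y

/-!
Let `M = max ‖h‖`. If `‖h x‖ = M`, then `λ h x = ∑ W y h y` writes a point of modulus `M` as a
convex combination of points of modulus `≤ M`, so `h y = λ h x` for every `y ∈ r⁻¹(x)` with
`W y > 0`. Thus `{‖h‖ = M}` is closed under `W`-positive preimages, and such a nonempty set is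
dense. Otherwise every point of it would be reached along a `W`-positive path from one of the
finitely many positive-weight preimages of `r(W⁻¹(0))` (follow a backward orbit entering it from
outside past its last zero of `W`), hence, by pigeonhole, from a point on a `W`-positive cycle.
That cycle is not a `W`-cycle, so one of its points has a second positive-weight sibling, which is
again periodic; this contradicts injectivity of `r` on periodic points.
So `‖h‖ ≡ M`, and `h = λ (h ∘ r)` holds on the dense set `{W ≠ 0}`, hence everywhere. A periodic
point makes `λ` a primitive `p`-th root of unity, `h / h x₀` then takes values in the `p`-th
roots of unity, and its level sets form the cyclic partition.
-/

open Function Set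

theorem exists_rel_self_of_forall_exists_rel {α : Type*} {R : α → α → Prop} [IsTrans α R]
    {S E : Set α} (hE : E.Finite) (h : ∀ q ∈ S, ∃ e ∈ E ∩ S, R e q) {q : α} (hq : q ∈ S) :
    ∃ e, R e e ∧ R e q := by
  by_contra! hirr
  let T := {e // e ∈ E ∧ e ∈ S ∧ R e q}
  have : Finite T := (hE.subset fun _ he => he.1).to_subtype
  have : IsTrans T fun a b => R a b := ⟨fun a b c => trans_of R⟩
  have : Std.Irrefl fun a b : T => R a b := ⟨fun a haa => hirr a haa a.2.2.2⟩
  obtain ⟨e₀, ⟨he₀E, he₀S⟩, he₀q⟩ := h q hq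
  obtain ⟨m, -, hmin⟩ := (Finite.wellFounded_of_trans_of_irrefl fun a b : T => R a b).has_min
    univ ⟨⟨e₀, he₀E, he₀S, he₀q⟩, trivial⟩
  obtain ⟨e, ⟨heE, heS⟩, hem⟩ := h m m.2.2.1
  exact hmin ⟨e, heE, heS, trans_of R hem m.2.2.2⟩ trivial hem

theorem eq_of_sum_smul_eq_of_norm_le {E ι : Type*} [NormedAddCommGroup E] [InnerProductSpace ℝ E]
    {s : Finset ι} {w : ι → ℝ} {z : ι → E} {a : E} (hw : ∀ i ∈ s, 0 ≤ w i)
    (hw1 : ∑ i ∈ s, w i = 1) (hz : ∀ i ∈ s, ‖z i‖ ≤ ‖a‖) (ha : ∑ i ∈ s, w i • z i = a)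
    {i : ι} (hi : i ∈ s) (hwi : 0 < w i) : z i = a := by
  have hsum : ∑ j ∈ s, w j * ‖z j - a‖ ^ 2 ≤ 0 :=
    calc ∑ j ∈ s, w j * ‖z j - a‖ ^ 2
        = ∑ j ∈ s, w j * ‖z j‖ ^ 2 - 2 * inner ℝ (∑ j ∈ s, w j • z j) a
            + (∑ j ∈ s, w j) * ‖a‖ ^ 2 := by
          simp only [norm_sub_sq_real, sum_inner, inner_smul_left, Finset.mul_sum,
            Finset.sum_mul, ← Finset.sum_sub_distrib, ← Finset.sum_add_distrib]
          refine Finset.sum_congr rfl fun j _ => ?_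
          simp only [RCLike.conj_to_real]
          ring
      _ ≤ ∑ j ∈ s, w j * ‖a‖ ^ 2 - 2 * ‖a‖ ^ 2 + ‖a‖ ^ 2 := by
          rw [ha, real_inner_self_eq_norm_sq, hw1, one_mul]
          gcongr with j hj
          exacts [hw j hj, hz j hj]
      _ = 0 := by rw [← Finset.sum_mul, hw1]; ring
  have hzero := (Finset.sum_eq_zero_iff_of_nonneg fun j hj => by positivity [hw j hj]).mp
    (le_antisymm hsum (Finset.sum_nonneg fun j hj => mul_nonneg (hw j hj) (sq_nonneg _))) i hi
  simpa [hwi.ne', sub_eq_zero] using hzero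

theorem isClopen_preimage_singleton_of_finite_range {α β : Type*} [TopologicalSpace α]
    [TopologicalSpace β] [T1Space β] {f : α → β} (hf : Continuous f) (hfin : (range f).Finite)
    (b : β) : IsClopen (f ⁻¹' {b}) := by
  refine ⟨isClosed_singleton.preimage hf, ?_⟩
  have hcompl : f ⁻¹' {b} = (f ⁻¹' (range f \ {b}))ᶜ := by ext; simp
  rw [hcompl]
  exact (hfin.sdiff.isClosed.preimage hf).isOpen_compl

section Dynamics

variable {X : Type*} {r : X → X} {W : X → ℝ}

structure IsNormalizedWeight (r : X → X) (W : X → ℝ) : Prop where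
  nonneg : ∀ x, 0 ≤ W x
  finsum_fiber : ∀ x, ∑ᶠ y ∈ r ⁻¹' {x}, W y = 1

namespace IsNormalizedWeight

theorem exists_pos_preimage (hW : IsNormalizedWeight r W) (x : X) : ∃ y, r y = x ∧ 0 < W y := by
  by_contra! h
  have hzero : ∑ᶠ y ∈ r ⁻¹' {x}, W y = 0 :=
    finsum_mem_eq_zero_of_forall_eq_zero fun y hy => (h y hy).antisymm (hW.nonneg y)
  exact zero_ne_one (hzero.symm.trans (hW.finsum_fiber x))

theorem exists_pos_preimage_ne (hW : IsNormalizedWeight r W) (hr_fin : ∀ x, (r ⁻¹' {x}).Finite)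
    {y : X} (hy : W y ≠ 1) : ∃ d, r d = r y ∧ 0 < W d ∧ d ≠ y := by
  by_contra! h
  have hsum := hW.finsum_fiber (r y)
  rw [finsum_mem_eq_finite_toFinset_sum _ (hr_fin (r y)),
    Finset.sum_eq_single_of_mem y (by simp) fun d hd hne =>
      (not_lt.mp fun hpos => hne (h d (by simpa using hd) hpos)).antisymm (hW.nonneg d)] at hsum
  exact hy hsum

end IsNormalizedWeight

def WReaches (r : X → X) (W : X → ℝ) : X → X → Prop :=
  Relation.TransGen fun y x => r y = x ∧ 0 < W y

namespace WReaches

instance : IsTrans X (WReaches r W) := inferInstanceAs (IsTrans X (Relation.TransGen _))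

theorem exists_iterate_eq {y x : X} (h : WReaches r W y x) : ∃ n, 0 < n ∧ r^[n] y = x := by
  induction h with
  | single hs => exact ⟨1, one_pos, hs.1⟩
  | tail _ hs ih =>
    obtain ⟨n, -, rfl⟩ := ih
    exact ⟨n + 1, n.succ_pos, by rw [iterate_succ_apply', hs.1]⟩

theorem mem_of_mem {S : Set X} (hS : ∀ y, r y ∈ S → 0 < W y → y ∈ S) {y x : X}
    (h : WReaches r W y x) (hx : x ∈ S) : y ∈ S := by
  induction h using Relation.TransGen.head_induction_on with
  | single hs => exact hS _ (hs.1 ▸ hx) hs.2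
  | head hs _ ih => exact hS _ (hs.1 ▸ ih) hs.2

theorem iterate_of_self {c : X} (h : WReaches r W c c) (k : ℕ) : WReaches r W (r^[k] c) c := by
  induction k with
  | zero => exact h
  | succ k ih =>
    obtain ⟨_, ⟨rfl, -⟩, hb⟩ := Relation.TransGen.head'_iff.mp ih
    rw [iterate_succ_apply']
    exact Relation.TransGen.trans_right hb h

theorem iterate_mem_periodicPts {c : X} (h : WReaches r W c c) (k : ℕ) :
    r^[k] c ∈ periodicPts r := by
  obtain ⟨n, hn, hcn⟩ := h.exists_iterate_eq
  exact mk_mem_periodicPts hn (IsPeriodicPt.apply_iterate hcn k)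

theorem mem_periodicPts_of_self {c d : X} (hc : WReaches r W c c) (hcd : WReaches r W c d) :
    d ∈ periodicPts r := by
  obtain ⟨u, -, rfl⟩ := hcd.exists_iterate_eq
  exact hc.iterate_mem_periodicPts u

end WReaches

theorem isCycle_image_iterate {c : X} (hc : c ∈ periodicPts r) :
    IsCycle r ((fun k => r^[k] c) '' Iio (minimalPeriod r c)) :=
  ⟨c, _, minimalPeriod_pos_of_mem_periodicPts hc, iterate_minimalPeriod,
    fun _ hm hmc => IsPeriodicPt.minimalPeriod_le hm hmc, rfl⟩

theorem isWCycle_of_wReaches_self (hW : IsNormalizedWeight r W)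
    (hr_fin : ∀ x, (r ⁻¹' {x}).Finite) {S : Set X} (hS : ∀ y, r y ∈ S → 0 < W y → y ∈ S)
    (hper : ∀ d ∈ S, ∃ e, WReaches r W e e ∧ WReaches r W e d) {c : X}
    (hc : WReaches r W c c) (hcS : c ∈ S) :
    IsWCycle r W ((fun k => r^[k] c) '' Iio (minimalPeriod r c)) := by
  refine ⟨isCycle_image_iterate (hc.iterate_mem_periodicPts 0), ?_⟩
  rintro _ ⟨k, -, rfl⟩
  by_contra hne
  obtain ⟨d, hd, hdW, hdne⟩ := hW.exists_pos_preimage_ne hr_fin hne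
  have hdc : WReaches r W d c :=
    .head ⟨by rw [hd, iterate_succ_apply'], hdW⟩ (hc.iterate_of_self (k + 1))
  obtain ⟨e, hee, hed⟩ := hper d (hdc.mem_of_mem hS hcS)
  exact hdne ((bijOn_periodicPts r).injOn (hee.mem_periodicPts_of_self hed)
    (hc.iterate_mem_periodicPts k) hd)

theorem exists_wReaches_of_not_wReaches (hW : IsNormalizedWeight r W) {q y : X} {n : ℕ}
    (hn : r^[n] (r y) = q) (hy : ¬ WReaches r W y q) :
    ∃ e, 0 < W e ∧ r e ∈ r '' {z | W z = 0} ∧ WReaches r W e q := by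
  have hlast : ∀ y, Relation.ReflTransGen (fun y x => r y = x ∧ 0 < W y) (r y) q →
      ¬ WReaches r W y q → ∃ e, 0 < W e ∧ r e ∈ r '' {z | W z = 0} ∧ WReaches r W e q := by
    intro y hry hy
    have hy0 : W y = 0 :=
      (not_lt.mp fun hpos => hy (.head' ⟨rfl, hpos⟩ hry)).antisymm (hW.nonneg y)
    obtain ⟨e, he, heW⟩ := hW.exists_pos_preimage (r y)
    exact ⟨e, heW, ⟨y, hy0, he.symm⟩, .head' ⟨he, heW⟩ hry⟩
  induction n generalizing y with
  | zero => exact hlast y (hn ▸ .refl) hy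
  | succ n ih =>
    by_cases hry : WReaches r W (r y) q
    · exact hlast y hry.to_reflTransGen hy
    · exact ih (by rwa [iterate_succ_apply] at hn) hry

theorem dense_of_pos_preimage_mem [TopologicalSpace X] (hW : IsNormalizedWeight r W)
    (hr_fin : ∀ x, (r ⁻¹' {x}).Finite)
    (hdense : ∀ x : X, Dense {y : X | ∃ n : ℕ, 0 < n ∧ r^[n] y = x})
    (hW_zeroes : {x : X | W x = 0}.Finite) (hnoWcycle : ¬∃ C : Set X, IsWCycle r W C)
    {S : Set X} (hS : ∀ y, r y ∈ S → 0 < W y → y ∈ S) (hne : S.Nonempty) :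
    Dense S := by
  by_contra hnd
  obtain ⟨U, hU, hUne, hUS⟩ : ∃ U, IsOpen U ∧ U.Nonempty ∧ U ∩ S = ∅ := by
    simpa [dense_iff_inter_open, not_nonempty_iff_eq_empty] using hnd
  set E := {e | 0 < W e ∧ r e ∈ r '' {z | W z = 0}}
  have hE : E.Finite :=
    ((hW_zeroes.image r).preimage' fun b _ => hr_fin b).subset fun _ he => he.2
  have hstep : ∀ q ∈ S, ∃ e ∈ E ∩ S, WReaches r W e q := by
    intro q hq
    obtain ⟨y, hyU, n, hn, rfl⟩ := (hdense q).inter_open_nonempty U hU hUne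
    obtain ⟨m, rfl⟩ : ∃ m, n = m + 1 := ⟨n - 1, by omega⟩
    have hy : ¬ WReaches r W y (r^[m + 1] y) := fun h =>
      (hUS.subset ⟨hyU, h.mem_of_mem hS hq⟩ : y ∈ (∅ : Set X))
    obtain ⟨e, heW, heZ, he⟩ :=
      exists_wReaches_of_not_wReaches hW (iterate_succ_apply r m y).symm hy
    exact ⟨e, ⟨⟨heW, heZ⟩, he.mem_of_mem hS hq⟩, he⟩
  obtain ⟨x₀, hx₀⟩ := hne
  obtain ⟨c, hcc, hcx⟩ := exists_rel_self_of_forall_exists_rel hE hstep hx₀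
  exact hnoWcycle ⟨_, isWCycle_of_wReaches_self hW hr_fin hS
    (fun d hd => exists_rel_self_of_forall_exists_rel hE hstep hd) hcc (hcx.mem_of_mem hS hx₀)⟩

theorem finite_of_isOpen_singleton [TopologicalSpace X]
    (hdense : ∀ x : X, Dense {y : X | ∃ n : ℕ, 0 < n ∧ r^[n] y = x}) {z : X}
    (hz : IsOpen {z}) : Finite X := by
  have horbit : ∀ w, ∃ n, 0 < n ∧ r^[n] z = w := fun w => by
    obtain ⟨_, rfl, hw⟩ := (hdense w).inter_open_nonempty {z} hz (singleton_nonempty z)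
    exact hw
  obtain ⟨n, hn, hzn⟩ := horbit z
  refine finite_univ_iff.mp (((finite_Iio n).image fun k => r^[k] z).subset fun w _ => ?_)
  obtain ⟨m, -, rfl⟩ := horbit w
  exact ⟨m % n, mem_Iio.mpr (Nat.mod_lt m hn), IsPeriodicPt.iterate_mod_apply hzn m⟩

-- An interior point of the finite zero set would be isolated, so `X` would be a finite periodic
-- orbit on which `r` is bijective, forcing `W ≡ 1`.
theorem dense_setOf_ne_zero [TopologicalSpace X] [T1Space X] (hW : IsNormalizedWeight r W)
    (hr_surj : Surjective r) (hdense : ∀ x : X, Dense {y : X | ∃ n : ℕ, 0 < n ∧ r^[n] y = x})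
    (hW_zeroes : {x : X | W x = 0}.Finite) : Dense {x | W x ≠ 0} := by
  show Dense {x | W x = 0}ᶜ
  rw [← interior_eq_empty_iff_dense_compl, eq_empty_iff_forall_notMem]
  intro z hz
  have := finite_of_isOpen_singleton hdense
    (isOpen_singleton_of_finite_mem_nhds z (mem_interior_iff_mem_nhds.mp hz) hW_zeroes)
  have hinj : Injective r := Finite.injective_iff_surjective.mpr hr_surj
  have hfib : r ⁻¹' {r z} = {z} := by
    ext
    simp [hinj.eq_iff]
  have h1 := hW.finsum_fiber (r z)
  rw [hfib, finsum_mem_singleton, interior_subset hz] at h1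
  exact zero_ne_one h1

end Dynamics

section Ruelle

variable {X : Type*} {r : X → X} {W : X → ℝ} {lam : ℂ} {h : X → ℂ}

theorem eq_mul_apply_of_forall_norm_le (hW : IsNormalizedWeight r W)
    (hr_fin : ∀ x, (r ⁻¹' {x}).Finite) (hlam : ‖lam‖ = 1)
    (hh_eig : ∀ x, RuelleOpC r W h x = lam * h x) {y : X} (hmax : ∀ z, ‖h z‖ ≤ ‖h (r y)‖)
    (hy : 0 < W y) : h y = lam * h (r y) := by
  have hfib := hr_fin (r y)
  refine eq_of_sum_smul_eq_of_norm_le (s := hfib.toFinset) (fun u _ => hW.nonneg u) ?_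
    (fun u _ => ?_) ?_ (by simp) hy
  · rw [← finsum_mem_eq_finite_toFinset_sum _ hfib]
    exact hW.finsum_fiber _
  · rw [norm_mul, hlam, one_mul]
    exact hmax u
  · simp_rw [Complex.real_smul]
    rw [← finsum_mem_eq_finite_toFinset_sum _ hfib]
    exact hh_eig _

theorem norm_eq_of_forall_norm_le [TopologicalSpace X] (hW : IsNormalizedWeight r W)
    (hr_fin : ∀ x, (r ⁻¹' {x}).Finite)
    (hdense : ∀ x : X, Dense {y : X | ∃ n : ℕ, 0 < n ∧ r^[n] y = x})
    (hW_zeroes : {x : X | W x = 0}.Finite) (hnoWcycle : ¬∃ C : Set X, IsWCycle r W C)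
    (hlam : ‖lam‖ = 1) (hh_cont : Continuous h) (hh_eig : ∀ x, RuelleOpC r W h x = lam * h x)
    {x₀ : X} (hmax : ∀ z, ‖h z‖ ≤ ‖h x₀‖) (x : X) : ‖h x‖ = ‖h x₀‖ := by
  have hS : ∀ y, r y ∈ {x | ‖h x‖ = ‖h x₀‖} → 0 < W y → y ∈ {x | ‖h x‖ = ‖h x₀‖} := by
    intro y hy hWy
    have hmax' : ∀ z, ‖h z‖ ≤ ‖h (r y)‖ := fun z => hy ▸ hmax z
    show ‖h y‖ = ‖h x₀‖
    rw [eq_mul_apply_of_forall_norm_le hW hr_fin hlam hh_eig hmax' hWy, norm_mul,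
      hlam, one_mul, hy]
  have hdenseS := dense_of_pos_preimage_mem hW hr_fin hdense hW_zeroes hnoWcycle hS ⟨x₀, rfl⟩
  exact congrFun (Continuous.ext_on hdenseS hh_cont.norm continuous_const fun _ hx => hx) x

theorem apply_eq_pow_mul_apply_iterate (hinv : ∀ x, h x = lam * h (r x)) (n : ℕ) (x : X) :
    h x = lam ^ n * h (r^[n] x) := by
  induction n with
  | zero => simp
  | succ n ih => rw [ih, hinv (r^[n] x), ← iterate_succ_apply' r, pow_succ, mul_assoc]

theorem exists_cyclic_partition [TopologicalSpace X] [CompactSpace X] [Nonempty X]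
    (hr_surj : Surjective r) (hdense : ∀ x : X, Dense {y : X | ∃ n : ℕ, 0 < n ∧ r^[n] y = x})
    (hh_cont : Continuous h) (hinv : ∀ x, h x = lam * h (r x)) (hh0 : ∀ x, h x ≠ 0) {p : ℕ}
    (hp0 : 0 < p) (hp : IsPrimitiveRoot lam p) :
    ∃ A : ℕ → Set X,
      (∀ k < p, IsCompact (A k) ∧ IsOpen (A k)) ∧
      (∀ j < p, ∀ k < p, j ≠ k → Disjoint (A j) (A k)) ∧
      (⋃ k ∈ Set.Iio p, A k) = Set.univ ∧
      (∀ k : ℕ, k < p - 1 → r '' A k = A (k + 1)) ∧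
      r '' A (p - 1) = A 0 ∧
      ∃ c : ℕ → ℂ,
        (∀ k < p, ∀ x ∈ A k, h x = c k) ∧
        (∀ k : ℕ, k < p - 1 → c k = lam * c (k + 1)) := by
  obtain ⟨x₀⟩ := ‹Nonempty X›
  have hlam0 : lam ≠ 0 := hp.ne_zero hp0.ne'
  set c : ℕ → ℂ := fun k => lam⁻¹ ^ k * h x₀
  have hc : ∀ k, c k = lam * c (k + 1) := fun k => by
    simp only [c, pow_succ, inv_pow]
    field_simp
  have hcover : ∀ x, ∃ k < p, h x = c k := by
    have hpow : ∀ x, (h x / h x₀) ^ p = 1 := by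
      refine congrFun (Continuous.ext_on (hdense x₀) (by fun_prop) continuous_const ?_)
      rintro y ⟨n, -, hy⟩
      show (h y / h x₀) ^ p = 1
      rw [apply_eq_pow_mul_apply_iterate hinv n y, hy, mul_div_cancel_right₀ _ (hh0 x₀), ← pow_mul,
        mul_comm, pow_mul, hp.pow_eq_one, one_pow]
    intro x
    have : NeZero p := ⟨hp0.ne'⟩
    obtain ⟨k, hk, hk'⟩ := hp.inv.eq_pow_of_pow_eq_one (hpow x)
    exact ⟨k, hk, by simp only [c, hk', div_mul_cancel₀ _ (hh0 x₀)]⟩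
  have hrange : (range h).Finite := ((finite_Iio p).image c).subset <| by
    rintro _ ⟨x, rfl⟩
    obtain ⟨k, hk, hx⟩ := hcover x
    exact ⟨k, hk, hx.symm⟩
  set A : ℕ → Set X := fun k => h ⁻¹' {c k}
  have hpre : ∀ k, r ⁻¹' A (k + 1) = A k := fun k => by
    ext x
    simp only [A, mem_preimage, mem_singleton_iff]
    rw [hinv x, hc k, mul_right_inj' hlam0]
  refine ⟨A, fun k _ => ?_, fun j hj k hk hjk => ?_, ?_, fun k _ => ?_, ?_, c,
    fun k _ x hx => hx, fun k _ => hc k⟩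
  · obtain ⟨hcl, hop⟩ := isClopen_preimage_singleton_of_finite_range hh_cont hrange (c k)
    exact ⟨hcl.isCompact, hop⟩
  · refine Disjoint.preimage h (disjoint_singleton.mpr fun hjk' => hjk ?_)
    exact hp.inv.pow_inj hj hk (mul_right_cancel₀ (hh0 x₀) hjk')
  · refine eq_univ_of_forall fun x => ?_
    obtain ⟨k, hk, hx⟩ := hcover x
    exact mem_biUnion hk hx
  · rw [← hpre, image_preimage_eq _ hr_surj]
  · rw [← hpre, image_preimage_eq _ hr_surj, Nat.sub_add_cancel hp0]
    simp [A, c, hp.pow_eq_one]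

end Ruelle

theorem stmt10_general
    {X : Type*} [MetricSpace X] [CompactSpace X]
    (r : X → X) (hr_cont : Continuous r) (hr_surj : Function.Surjective r)
    (hr_fin : ∀ x : X, (r ⁻¹' {x}).Finite)
    -- the backward orbit of every point is dense
    (hdense : ∀ x : X, Dense {y : X | ∃ n : ℕ, 0 < n ∧ r^[n] y = x})
    (W : X → ℝ) (hW_nonneg : ∀ x, 0 ≤ W x)
    (hW_zeroes : {x : X | W x = 0}.Finite)
    (hW1 : ∀ x : X, (∑ᶠ y ∈ r ⁻¹' {x}, W y) = 1)
    -- there are no `W`-cycles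
    (hnoWcycle : ¬∃ C : Set X, IsWCycle r W C)
    -- `lam` is a peripheral eigenvalue `≠ 1` with continuous eigenfunction `h ≠ 0`
    (lam : ℂ) (hlam_abs : ‖lam‖ = 1)
    (h : X → ℂ) (hh_cont : Continuous h) (hh_ne : h ≠ 0)
    (hh_eig : ∀ x, RuelleOpC r W h x = lam * h x) :
    -- then `h = λ · (h ∘ r)`,
    (∀ x : X, h x = lam * h (r x)) ∧
    -- and if `r` has a periodic point, then `lam` is a root of unity and for the
    -- minimal `p` with `lam ^ p = 1` there is the asserted partition of `X`
    ((∃ (x : X) (n : ℕ), 0 < n ∧ r^[n] x = x) →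
      (∃ m : ℕ, 0 < m ∧ lam ^ m = 1) ∧
      ∀ p : ℕ, 0 < p → lam ^ p = 1 → (∀ q : ℕ, 0 < q → lam ^ q = 1 → p ≤ q) →
        ∃ A : ℕ → Set X,
          (∀ k < p, IsCompact (A k) ∧ IsOpen (A k)) ∧
          (∀ j < p, ∀ k < p, j ≠ k → Disjoint (A j) (A k)) ∧
          (⋃ k ∈ Set.Iio p, A k) = Set.univ ∧
          (∀ k : ℕ, k < p - 1 → r '' A k = A (k + 1)) ∧
          r '' A (p - 1) = A 0 ∧
          ∃ c : ℕ → ℂ,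
            (∀ k < p, ∀ x ∈ A k, h x = c k) ∧
            (∀ k : ℕ, k < p - 1 → c k = lam * c (k + 1))) := by
  have hW : IsNormalizedWeight r W := ⟨hW_nonneg, hW1⟩
  obtain ⟨x₁, hx₁⟩ : ∃ x, h x ≠ 0 := by
    by_contra! h0
    exact hh_ne (funext h0)
  have : Nonempty X := ⟨x₁⟩
  obtain ⟨x₀, -, hx₀⟩ := isCompact_univ.exists_isMaxOn univ_nonempty hh_cont.norm.continuousOn
  have hnorm := norm_eq_of_forall_norm_le hW hr_fin hdense hW_zeroes hnoWcycle hlam_abs hh_cont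
    hh_eig fun z => hx₀ (mem_univ z)
  have hh0 : ∀ x, h x ≠ 0 := fun x hx => hx₁ <| by
    rw [← norm_eq_zero, hnorm x₁, ← hnorm x, hx, norm_zero]
  have hinv : ∀ x, h x = lam * h (r x) := by
    refine congrFun (Continuous.ext_on (dense_setOf_ne_zero hW hr_surj hdense hW_zeroes) hh_cont
      (by fun_prop) fun y hy => ?_)
    refine eq_mul_apply_of_forall_norm_le hW hr_fin hlam_abs hh_eig (fun z => ?_)
      ((hW.nonneg y).lt_of_ne' hy)
    rw [hnorm (r y)]
    exact hx₀ (mem_univ z)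
  refine ⟨hinv, fun ⟨x, n, hn, hx⟩ => ⟨⟨n, hn, ?_⟩, fun p hp hp1 hmin => ?_⟩⟩
  · have hxn := apply_eq_pow_mul_apply_iterate hinv n x
    rw [hx] at hxn
    exact (mul_eq_right₀ (hh0 x)).mp hxn.symm
  · exact exists_cyclic_partition hr_surj hdense hh_cont hinv hh0 hp
      (IsPrimitiveRoot.mk_of_lt lam hp hp1 fun l hl hlp hl1 => (hmin l hl hl1).not_gt hlp)

theorem stmt10
    {X : Type*} [MetricSpace X] [CompactSpace X] [MeasurableSpace X] [BorelSpace X]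
    (r : X → X) (hr_cont : Continuous r) (hr_surj : Function.Surjective r)
    (hr_fin : ∀ x : X, (r ⁻¹' {x}).Finite)
    -- the backward orbit of every point is dense
    (hdense : ∀ x : X, Dense {y : X | ∃ n : ℕ, 0 < n ∧ r^[n] y = x})
    (W : X → ℝ) (hW_cont : Continuous W) (hW_nonneg : ∀ x, 0 ≤ W x)
    (hW_zeroes : {x : X | W x = 0}.Finite)
    (hW1 : ∀ x : X, (∑ᶠ y ∈ r ⁻¹' {x}, W y) = 1)
    -- there are no `W`-cycles
    (hnoWcycle : ¬∃ C : Set X, IsWCycle r W C)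
    -- `lam` is a peripheral eigenvalue `≠ 1` with continuous eigenfunction `h ≠ 0`
    (lam : ℂ) (hlam_abs : ‖lam‖ = 1) (hlam_ne : lam ≠ 1)
    (h : X → ℂ) (hh_cont : Continuous h) (hh_ne : h ≠ 0)
    (hh_eig : ∀ x, RuelleOpC r W h x = lam * h x) :
    -- then `h = λ · (h ∘ r)`,
    (∀ x : X, h x = lam * h (r x)) ∧
    -- and if `r` has a periodic point, then `lam` is a root of unity and for the
    -- minimal `p` with `lam ^ p = 1` there is the asserted partition of `X`
    ((∃ (x : X) (n : ℕ), 0 < n ∧ r^[n] x = x) →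
      (∃ m : ℕ, 0 < m ∧ lam ^ m = 1) ∧
      ∀ p : ℕ, 0 < p → lam ^ p = 1 → (∀ q : ℕ, 0 < q → lam ^ q = 1 → p ≤ q) →
        ∃ A : ℕ → Set X,
          (∀ k < p, IsCompact (A k) ∧ IsOpen (A k)) ∧
          (∀ j < p, ∀ k < p, j ≠ k → Disjoint (A j) (A k)) ∧
          (⋃ k ∈ Set.Iio p, A k) = Set.univ ∧
          (∀ k : ℕ, k < p - 1 → r '' A k = A (k + 1)) ∧
          r '' A (p - 1) = A 0 ∧
          ∃ c : ℕ → ℂ,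
            (∀ k < p, ∀ x ∈ A k, h x = c k) ∧
            (∀ k : ℕ, k < p - 1 → c k = lam * c (k + 1))) :=
  stmt10_general r hr_cont hr_surj hr_fin hdense W hW_nonneg hW_zeroes hW1 hnoWcycle lam hlam_abs h
    hh_cont hh_ne hh_eig
end

section
/- Let X be a compact metric space, r : X → X continuous, surjective, finite-to-one, and W : X → [0,∞) measurable with R_W 1 = 1. Let x₀ ∈ X be a fixed point of r (x₀ ∈ r⁻¹(x₀)) with W(x₀) = 1, and define h_{x₀}(x) = P_x(N_{x₀}(x)), where N_{x₀}(x) = {(z_n)_{n≥1} ∈ Ω_x : lim_{n→∞} z_n = x₀}. Then: (a) R_W h_{x₀} = h_{x₀}, 0 ≤ h_{x₀} ≤ 1, and h_{x₀}(x₀) = 1; (b) if h is any nonnegative function with R_W h = h, h(x₀) = 1, and h continuous at x₀, then h_{x₀} ≤ h pointwise. -/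
open MeasureTheory Filter Topology

/-- `N_{x₀}(x)`: the set of paths starting at `x` converging to `x₀`. -/
def pathsTo {X : Type*} [MetricSpace X] (r : X → X) (x₀ x : X) : Set (ℕ → X) :=
  {z | IsPathFrom r x z ∧ Filter.Tendsto z Filter.atTop (nhds x₀)}

/-!
Conditioning on the first step of a path gives the Markov property
`P_x(z_1 = y, (z_{k+1})_k ∈ A) = W(y) P_y(A)` on the σ-algebra generated by cylinders, which
contains `N_{x₀}(x)` and the events `{z_n ∈ B}` because `r` is finite-to-one. Splitting
`N_{x₀}(x)` according to `z_1` shows that `h_{x₀}` is harmonic, and that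
`P_x(z_n ∈ B) = R_W^n 𝟙_B (x)`. At the fixed point, `W(x₀) = 1` makes the constant path almost
sure, so `h_{x₀}(x₀) = 1`. For minimality, if `g ≥ t` on a neighbourhood `U` of `x₀` then
`t P_x(z_n ∈ U) = R_W^n (t 𝟙_U)(x) ≤ R_W^n g (x) = g(x)` for every `n`; a path converging to `x₀`
eventually stays in `U`, so `t h_{x₀}(x) ≤ g(x)`, and `t → 1` gives `h_{x₀} ≤ g`.
-/

open MeasureTheory Filter Topology Set

section RuelleOp

variable {X : Type*} {r : X → X} {W : X → ℝ}

lemma ruelleOp_eq_sum (hr : ∀ x : X, (r ⁻¹' {x}).Finite) (f : X → ℝ) (x : X) :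
    RuelleOp r W f x = ∑ y ∈ (hr x).toFinset, W y * f y :=
  finsum_mem_eq_finite_toFinset_sum _ (hr x)

lemma ruelleOp_mono (hr : ∀ x : X, (r ⁻¹' {x}).Finite) (hW : ∀ x, 0 ≤ W x) :
    Monotone (RuelleOp r W) := fun f g hfg x => by
  simp only [ruelleOp_eq_sum hr]
  exact Finset.sum_le_sum fun y _ => mul_le_mul_of_nonneg_left (hfg y) (hW y)

lemma ruelleOp_smul (hr : ∀ x : X, (r ⁻¹' {x}).Finite) (c : ℝ) (f : X → ℝ) :
    RuelleOp r W (c • f) = c • RuelleOp r W f := by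
  ext x
  simp only [ruelleOp_eq_sum hr, Pi.smul_apply, smul_eq_mul, Finset.mul_sum, mul_left_comm]

end RuelleOp

lemma MeasureTheory.measure_le_of_eventually_mem {α : Type*} [MeasurableSpace α] {μ : Measure α}
    {s : Set α} {E : ℕ → Set α} {c : ENNReal} (hs : ∀ w ∈ s, ∀ᶠ n in atTop, w ∈ E n)
    (hE : ∀ n, μ (E n) ≤ c) : μ s ≤ c := by
  have hmono : Monotone fun N => ⋂ n ≥ N, E n := fun a b hab =>
    biInter_mono (fun n hn => le_trans hab hn) fun _ _ => subset_rfl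
  calc μ s ≤ μ (⋃ N, ⋂ n ≥ N, E n) := measure_mono fun w hw =>
        mem_iUnion.2 ((eventually_atTop.1 (hs w hw)).imp fun N hN => mem_iInter₂.2 hN)
    _ = ⨆ N, μ (⋂ n ≥ N, E n) := hmono.measure_iUnion
    _ ≤ c := iSup_le fun N => (measure_mono (biInter_subset_of_mem le_rfl)).trans (hE N)

namespace PathSpace

variable {X : Type*} {r : X → X} {x y : X}

def tail (w : ℕ → X) : ℕ → X := fun n => w (n + 1)

/-- `cons x w` is the path `w` preceded by its starting point, so `cons x w n` is `z_n` in the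
indexing `z_0 = x, z_1, z_2, …`. -/
def cons (y : X) (w : ℕ → X) : ℕ → X
  | 0 => y
  | n + 1 => w n

@[simp] lemma cons_zero (y : X) (w : ℕ → X) : cons y w 0 = y := rfl

@[simp] lemma cons_succ (y : X) (w : ℕ → X) (n : ℕ) : cons y w (n + 1) = w n := rfl

@[simp] lemma tail_apply (w : ℕ → X) (n : ℕ) : tail w n = w (n + 1) := rfl

lemma cons_head_tail (w : ℕ → X) : cons (w 0) (tail w) = w := by
  funext n; cases n <;> rfl

lemma tendsto_cons_iff {l : Filter X} {w : ℕ → X} :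
    Tendsto (cons y w) atTop l ↔ Tendsto w atTop l :=
  (tendsto_add_atTop_iff_nat 1).symm

lemma tendsto_tail_iff {l : Filter X} {w : ℕ → X} :
    Tendsto (tail w) atTop l ↔ Tendsto w atTop l :=
  tendsto_add_atTop_iff_nat 1

lemma isPathFrom_iff_tail {w : ℕ → X} :
    IsPathFrom r x w ↔ r (w 0) = x ∧ IsPathFrom r (w 0) (tail w) :=
  ⟨fun h => ⟨h.1, h.2 0, fun n => h.2 (n + 1)⟩,
    fun h => ⟨h.1, fun n => n.casesOn h.2.1 h.2.2⟩⟩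

lemma isPathFrom_cons {u : ℕ → X} (hy : r y = x) (hu : IsPathFrom r y u) :
    IsPathFrom r x (cons y u) :=
  isPathFrom_iff_tail.2 ⟨hy, hu⟩

lemma exists_isPathFrom (hr : Function.Surjective r) (x : X) : ∃ z, IsPathFrom r x z := by
  refine ⟨fun n => (Function.surjInv hr)^[n + 1] x, Function.surjInv_eq hr x, fun n => ?_⟩
  simp only [Function.iterate_succ_apply' _ (n + 1)]
  exact Function.surjInv_eq hr _

lemma IsPathFrom.iterate_apply {w : ℕ → X} (h : IsPathFrom r x w) (n : ℕ) :
    r^[n + 1] (w n) = x := by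
  induction n with
  | zero => exact h.1
  | succ n ih => rw [Function.iterate_succ_apply, h.2 n, ih]

lemma finite_preimage_iterate (hr : ∀ x : X, (r ⁻¹' {x}).Finite) (n : ℕ) (x : X) :
    (r^[n] ⁻¹' {x}).Finite := by
  induction n with
  | zero => simp
  | succ n ih =>
    rw [Function.iterate_succ, Set.preimage_comp]
    exact ih.preimage' fun y _ => hr y

lemma pathCylinder_zero (z : ℕ → X) : pathCylinder r x z 0 = {w | IsPathFrom r x w} := by
  simp [pathCylinder]

lemma pathCylinder_eq_of_mem {z u : ℕ → X} {n : ℕ} (hu : u ∈ pathCylinder r x z n) :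
    pathCylinder r x z n = pathCylinder r x u n := by
  ext w
  simp only [pathCylinder, mem_ofPred_eq]
  exact and_congr_right fun _ => forall₂_congr fun i hi => by rw [hu.2 i hi]

lemma pathCylinder_inter_pathCylinder (z : ℕ → X) (n m : ℕ) :
    pathCylinder r x z n ∩ pathCylinder r x z m = pathCylinder r x z (max n m) := by
  ext w
  simp only [pathCylinder, mem_inter_iff, mem_ofPred_eq, lt_max_iff]
  grind

lemma cons_eq_of_mem_pathCylinder {z w : ℕ → X} {n : ℕ} (hw : w ∈ pathCylinder r x z n) :
    cons x w n = cons x z n := by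
  cases n with
  | zero => rfl
  | succ n => exact hw.2 n n.lt_succ_self

lemma cons_inter_tail_preimage_pathCylinder {u : ℕ → X} (hy : r y = x)
    (hu : IsPathFrom r y u) (n : ℕ) :
    {w | w 0 = y} ∩ tail ⁻¹' pathCylinder r y u n = pathCylinder r x (cons y u) (n + 1) := by
  ext w
  simp only [pathCylinder, mem_inter_iff, mem_ofPred_eq, mem_preimage, Nat.forall_lt_succ_left,
    cons_zero, cons_succ, tail_apply]
  constructor
  · rintro ⟨rfl, hw, hwu⟩
    exact ⟨isPathFrom_iff_tail.2 ⟨hy, hw⟩, rfl, hwu⟩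
  · rintro ⟨hw, rfl, hwu⟩
    exact ⟨rfl, (isPathFrom_iff_tail.1 hw).2, hwu⟩


lemma setOf_isPathFrom_and_eq_biUnion (Q : X → (ℕ → X) → Prop) :
    {w | IsPathFrom r x w ∧ Q (w 0) (tail w)} =
      ⋃ y ∈ r ⁻¹' {x}, {w | w 0 = y} ∩ tail ⁻¹' {u | IsPathFrom r y u ∧ Q y u} := by
  ext w
  rw [mem_ofPred_eq, isPathFrom_iff_tail]
  simp only [mem_iUnion, mem_inter_iff, mem_preimage, mem_singleton_iff, mem_ofPred_eq]
  exact ⟨fun ⟨⟨hx, hw⟩, hQ⟩ => ⟨w 0, hx, rfl, hw, hQ⟩, fun ⟨_, hx, rfl, hw, hQ⟩ => ⟨⟨hx, hw⟩, hQ⟩⟩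

lemma finite_image_pathCylinder (hr : ∀ x : X, (r ⁻¹' {x}).Finite) (x : X) (n : ℕ) :
    ((fun z => pathCylinder r x z n) '' {w | IsPathFrom r x w}).Finite := by
  let G : (Fin n → X) → Set (ℕ → X) := fun p => {w | IsPathFrom r x w ∧ ∀ i : Fin n, w i = p i}
  have hG : (fun z => pathCylinder r x z n) = G ∘ fun z i => z i := by
    ext z w
    simp [G, pathCylinder, Fin.forall_iff]
  rw [hG, Set.image_comp]
  refine Set.Finite.image _ <| (Set.Finite.pi (t := fun i : Fin n => r^[i + 1] ⁻¹' {x})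
    fun i => finite_preimage_iterate hr _ x).subset ?_
  rintro _ ⟨w, hw, rfl⟩ i -
  exact IsPathFrom.iterate_apply hw i

variable (r) in
def cylinders (x : X) : Set (Set (ℕ → X)) := {s | ∃ z n, s = pathCylinder r x z n}

variable (r) in
/-- The σ-algebra generated by the cylinders of paths from `x`; the measures `P x` are pinned
down on it only. -/
abbrev cylinderMeasurableSpace (x : X) : MeasurableSpace (ℕ → X) :=
  MeasurableSpace.generateFrom (cylinders r x)

lemma isPiSystem_cylinders : IsPiSystem (cylinders r x) := by
  rintro _ ⟨z, n, rfl⟩ _ ⟨z', m, rfl⟩ ⟨w, hwz, hwz'⟩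
  rw [pathCylinder_eq_of_mem hwz, pathCylinder_eq_of_mem hwz', pathCylinder_inter_pathCylinder]
  exact ⟨w, _, rfl⟩

lemma measurableSet_cylinder_pathCylinder (z : ℕ → X) (n : ℕ) :
    MeasurableSet[cylinderMeasurableSpace r x] (pathCylinder r x z n) :=
  MeasurableSpace.measurableSet_generateFrom ⟨z, n, rfl⟩

lemma measurableSet_cylinder_setOf_cons_mem (hr : ∀ x : X, (r ⁻¹' {x}).Finite) (n : ℕ)
    (B : Set X) :
    MeasurableSet[cylinderMeasurableSpace r x] {w | IsPathFrom r x w ∧ cons x w n ∈ B} := by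
  set S := {w | IsPathFrom r x w ∧ cons x w n ∈ B}
  have hS : S = ⋃₀ ((fun z => pathCylinder r x z n) '' S) := by
    ext w
    simp only [mem_sUnion, mem_image, exists_exists_and_eq_and]
    refine ⟨fun hw => ⟨w, hw, hw.1, fun _ _ => rfl⟩, ?_⟩
    rintro ⟨z, hz, hw⟩
    exact ⟨hw.1, (cons_eq_of_mem_pathCylinder hw).symm ▸ hz.2⟩
  rw [hS]
  refine MeasurableSet.sUnion ?_ ?_
  · exact ((finite_image_pathCylinder hr x n).subset (image_mono fun w hw => hw.1)).countable
  · rintro _ ⟨z, -, rfl⟩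
    exact measurableSet_cylinder_pathCylinder z n

lemma measurableSet_cylinder_pathsTo [MetricSpace X] (hr : ∀ x : X, (r ⁻¹' {x}).Finite)
    (x₀ x : X) : MeasurableSet[cylinderMeasurableSpace r x] (pathsTo r x₀ x) := by
  have hpaths : pathsTo r x₀ x = ⋂ k : ℕ, ⋃ N : ℕ, ⋂ n ≥ N,
      {w | IsPathFrom r x w ∧ cons x w n ∈ Metric.ball x₀ (1 / (k + 1))} := by
    ext w
    have hbasis := (Metric.nhds_basis_ball_inv_nat_succ (x := x₀)).tendsto_right_iff
      (f := cons x w) (la := atTop)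
    simp only [eventually_atTop, true_implies] at hbasis
    simp only [pathsTo, mem_ofPred_eq, mem_iInter, mem_iUnion]
    rw [← tendsto_cons_iff (y := x), hbasis]
    refine ⟨fun ⟨hw, h⟩ k => (h k).imp fun N hN n hn => ⟨hw, hN n hn⟩,
      fun h => ⟨?_, fun k => (h k).imp fun N hN n hn => (hN n hn).2⟩⟩
    obtain ⟨N, hN⟩ := h 0
    exact (hN N le_rfl).1
  rw [hpaths]
  exact .iInter fun k => .iUnion fun N => .iInter fun n => .iInter fun _ =>
    measurableSet_cylinder_setOf_cons_mem hr n _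

section Measure

variable [MeasurableSpace X]

lemma measurable_tail : Measurable (tail : (ℕ → X) → ℕ → X) :=
  measurable_pi_lambda _ fun n => measurable_pi_apply (n + 1)

variable (r) in
def IsPathMeasure (W : X → ℝ) (P : X → Measure (ℕ → X)) : Prop :=
  ∀ x z n, IsPathFrom r x z →
    P x (pathCylinder r x z n) = ∏ i ∈ Finset.range n, ENNReal.ofReal (W (z i))

namespace IsPathMeasure

variable {W : X → ℝ} {P : X → Measure (ℕ → X)}

lemma measure_setOf_isPathFrom (hP : IsPathMeasure r W P) (hr : Function.Surjective r) (x : X) :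
    P x {w | IsPathFrom r x w} = 1 := by
  obtain ⟨z, hz⟩ := exists_isPathFrom hr x
  simpa [pathCylinder_zero] using hP x z 0 hz

lemma measure_inter_tail_preimage_pathCylinder (hP : IsPathMeasure r W P) (hy : r y = x)
    (z : ℕ → X) (n : ℕ) :
    P x ({w | w 0 = y} ∩ tail ⁻¹' pathCylinder r y z n) =
      ENNReal.ofReal (W y) * P y (pathCylinder r y z n) := by
  rcases (pathCylinder r y z n).eq_empty_or_nonempty with h | ⟨u, hu⟩
  · simp [h]
  rw [pathCylinder_eq_of_mem hu, cons_inter_tail_preimage_pathCylinder hy hu.1,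
    hP _ _ _ (isPathFrom_cons hy hu.1), hP _ _ _ hu.1, Finset.prod_range_succ', mul_comm]
  rfl

end IsPathMeasure

variable [MeasurableEq X]

lemma measurableSet_setOf_isPathFrom (hr : Measurable r) (x : X) :
    MeasurableSet {w : ℕ → X | IsPathFrom r x w} := by
  simp only [IsPathFrom, ofPred_and, ofPred_forall]
  exact (measurableSet_eq_fun (hr.comp (measurable_pi_apply 0)) measurable_const).inter
    (.iInter fun n => measurableSet_eq_fun (hr.comp (measurable_pi_apply _))
      (measurable_pi_apply n))

lemma measurableSet_pathCylinder (hr : Measurable r) (x : X) (z : ℕ → X) (n : ℕ) :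
    MeasurableSet (pathCylinder r x z n) := by
  simp only [pathCylinder, ofPred_and, ofPred_forall]
  exact (measurableSet_setOf_isPathFrom hr x).inter (.iInter fun i => .iInter fun _ =>
    measurableSet_eq_fun (measurable_pi_apply i) measurable_const)

lemma cylinderMeasurableSpace_le (hr : Measurable r) (x : X) :
    cylinderMeasurableSpace r x ≤ MeasurableSpace.pi :=
  MeasurableSpace.generateFrom_le fun _ ⟨z, n, hs⟩ => hs ▸ measurableSet_pathCylinder hr x z n

namespace IsPathMeasure

variable {W : X → ℝ} {P : X → Measure (ℕ → X)}

lemma ae_eq_const (hP : IsPathMeasure r W P) (hr : Measurable r) [IsProbabilityMeasure (P x)]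
    (hx : r x = x) (hW : W x = 1) : ∀ᵐ w ∂P x, w = fun _ => x := by
  have hc : IsPathFrom r x fun _ => x := ⟨hx, fun _ => hx⟩
  have hcyl : ∀ n, ∀ᵐ w ∂P x, w ∈ pathCylinder r x (fun _ => x) n := fun n => by
    rw [ae_mem_iff_measure_eq (measurableSet_pathCylinder hr _ _ n).nullMeasurableSet,
      hP _ _ n hc, measure_univ]
    simp [hW]
  filter_upwards [ae_all_iff.2 hcyl] with w hw
  exact funext fun i => (hw (i + 1)).2 i i.lt_succ_self

variable [∀ x, IsProbabilityMeasure (P x)]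

lemma ae_isPathFrom (hP : IsPathMeasure r W P) (hr : Function.Surjective r)
    (hr_meas : Measurable r) (x : X) : ∀ᵐ w ∂P x, IsPathFrom r x w := by
  rw [ae_iff_measure_eq (measurableSet_setOf_isPathFrom hr_meas x).nullMeasurableSet,
    measure_setOf_isPathFrom hP hr, measure_univ]

/-- Markov property: both sides are finite measures in `A` that agree on cylinders. -/
lemma measure_inter_tail_preimage (hP : IsPathMeasure r W P) (hr : Function.Surjective r)
    (hr_meas : Measurable r) (hy : r y = x) {A : Set (ℕ → X)}
    (hA : MeasurableSet[cylinderMeasurableSpace r y] A) :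
    P x ({w | w 0 = y} ∩ tail ⁻¹' A) = ENNReal.ofReal (W y) * P y A := by
  have hle := cylinderMeasurableSpace_le hr_meas y
  have hμ : ∀ s, MeasurableSet s →
      ((P x).restrict {w | w 0 = y}).map tail s = P x ({w | w 0 = y} ∩ tail ⁻¹' s) :=
    fun s hs => by
      rw [Measure.map_apply measurable_tail hs, Measure.restrict_apply (measurable_tail hs),
        inter_comm]
  suffices (((P x).restrict {w | w 0 = y}).map tail).trim hle =
      (ENNReal.ofReal (W y) • P y).trim hle by
    have := congr_arg (· A) this
    simp only [trim_measurableSet_eq hle hA, hμ A (hle A hA)] at this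
    exact this
  refine ext_of_generate_finite (cylinders r y) rfl isPiSystem_cylinders ?_ ?_
  · rintro _ ⟨z, n, rfl⟩
    rw [trim_measurableSet_eq hle (measurableSet_cylinder_pathCylinder z n),
      trim_measurableSet_eq hle (measurableSet_cylinder_pathCylinder z n),
      hμ _ (measurableSet_pathCylinder hr_meas y z n),
      measure_inter_tail_preimage_pathCylinder hP hy]
    rfl
  · obtain ⟨z, -⟩ := exists_isPathFrom hr y
    have hpath : ({w | w 0 = y} : Set (ℕ → X)) =ᵐ[P x]
        ({w | w 0 = y} ∩ tail ⁻¹' pathCylinder r y z 0 : Set (ℕ → X)) := by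
      refine (ae_isPathFrom hP hr hr_meas x).mono fun w hw => ?_
      simp only [pathCylinder_zero]
      exact propext ⟨fun h => ⟨h, h ▸ (isPathFrom_iff_tail.1 hw).2⟩, And.left⟩
    rw [trim_measurableSet_eq hle MeasurableSet.univ, trim_measurableSet_eq hle MeasurableSet.univ,
      hμ _ MeasurableSet.univ, preimage_univ, inter_univ, measure_congr hpath,
      measure_inter_tail_preimage_pathCylinder hP hy, pathCylinder_zero,
      measure_setOf_isPathFrom hP hr, Measure.smul_apply, measure_univ, smul_eq_mul]

lemma measureReal_eq_ruelleOp (hP : IsPathMeasure r W P) (hr : Function.Surjective r)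
    (hr_meas : Measurable r) (hr_fin : ∀ x : X, (r ⁻¹' {x}).Finite) (hW : ∀ x, 0 ≤ W x)
    (Q : X → (ℕ → X) → Prop)
    (hQ : ∀ y, MeasurableSet[cylinderMeasurableSpace r y] {u | IsPathFrom r y u ∧ Q y u})
    (x : X) :
    (P x).real {w | IsPathFrom r x w ∧ Q (w 0) (tail w)} =
      RuelleOp r W (fun y => (P y).real {u | IsPathFrom r y u ∧ Q y u}) x := by
  rw [setOf_isPathFrom_and_eq_biUnion, ← (hr_fin x).coe_toFinset, Finset.set_biUnion_coe,
    measureReal_biUnion_finset, ruelleOp_eq_sum hr_fin]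
  · refine Finset.sum_congr rfl fun y hy => ?_
    rw [measureReal_def, measure_inter_tail_preimage hP hr hr_meas
      ((hr_fin x).mem_toFinset.1 hy) (hQ y), ENNReal.toReal_mul, ENNReal.toReal_ofReal (hW y)]
    rfl
  · exact fun a _ b _ hab => disjoint_left.2 fun w ha hb => hab (ha.1.symm.trans hb.1)
  · exact fun y _ => (measurableSet_eq_fun (measurable_pi_apply 0) measurable_const).inter
      (measurable_tail (cylinderMeasurableSpace_le hr_meas y _ (hQ y)))

lemma measureReal_setOf_cons_mem (hP : IsPathMeasure r W P) (hr : Function.Surjective r)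
    (hr_meas : Measurable r) (hr_fin : ∀ x : X, (r ⁻¹' {x}).Finite) (hW : ∀ x, 0 ≤ W x)
    (B : Set X) (n : ℕ) (x : X) :
    (P x).real {w | IsPathFrom r x w ∧ cons x w n ∈ B} = (RuelleOp r W)^[n] (B.indicator 1) x := by
  induction n generalizing x with
  | zero =>
    by_cases hx : x ∈ B
    · simp [hx, measureReal_def, hP.measure_setOf_isPathFrom hr]
    · simp [hx]
  | succ n ih =>
    have hcons : {w | IsPathFrom r x w ∧ cons x w (n + 1) ∈ B} =
        {w | IsPathFrom r x w ∧ cons (w 0) (tail w) n ∈ B} := by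
      simp only [cons_head_tail, cons_succ]
    rw [Function.iterate_succ_apply', ← funext ih, hcons]
    exact measureReal_eq_ruelleOp hP hr hr_meas hr_fin hW (fun y u => cons y u n ∈ B)
      (fun y => measurableSet_cylinder_setOf_cons_mem hr_fin n B) x

end IsPathMeasure

end Measure

end PathSpace

section PathsTo

open PathSpace

variable {X : Type*} [MetricSpace X] [MeasurableSpace X] [MeasurableEq X] {r : X → X}
  {W : X → ℝ} {P : X → Measure (ℕ → X)} [∀ x, IsProbabilityMeasure (P x)]

lemma ruelleOp_measureReal_pathsTo (hP : IsPathMeasure r W P) (hr : Function.Surjective r)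
    (hr_meas : Measurable r) (hr_fin : ∀ x : X, (r ⁻¹' {x}).Finite) (hW : ∀ x, 0 ≤ W x)
    (x₀ : X) :
    RuelleOp r W (fun x => (P x).real (pathsTo r x₀ x)) = fun x => (P x).real (pathsTo r x₀ x) := by
  funext x
  have hpaths : pathsTo r x₀ x = {w | IsPathFrom r x w ∧ Tendsto (tail w) atTop (𝓝 x₀)} := by
    simp only [pathsTo, tendsto_tail_iff]
  rw [hpaths]
  exact (hP.measureReal_eq_ruelleOp hr hr_meas hr_fin hW (fun _ u => Tendsto u atTop (𝓝 x₀))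
    (fun y => measurableSet_cylinder_pathsTo hr_fin x₀ y) x).symm

lemma measureReal_pathsTo_self (hP : IsPathMeasure r W P) (hr_meas : Measurable r)
    (hr_fin : ∀ x : X, (r ⁻¹' {x}).Finite) {x₀ : X} (hx₀ : r x₀ = x₀) (hW : W x₀ = 1) :
    (P x₀).real (pathsTo r x₀ x₀) = 1 := by
  have hae : ∀ᵐ w ∂P x₀, w ∈ pathsTo r x₀ x₀ := (hP.ae_eq_const hr_meas hx₀ hW).mono
    fun w hw => hw ▸ ⟨⟨hx₀, fun _ => hx₀⟩, tendsto_const_nhds⟩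
  rw [measureReal_def, (ae_mem_iff_measure_eq (cylinderMeasurableSpace_le hr_meas _ _
    (measurableSet_cylinder_pathsTo hr_fin x₀ x₀)).nullMeasurableSet).1 hae, measure_univ,
    ENNReal.toReal_one]

lemma mul_measure_pathsTo_le (hP : IsPathMeasure r W P) (hr : Function.Surjective r)
    (hr_meas : Measurable r) (hr_fin : ∀ x : X, (r ⁻¹' {x}).Finite) (hW : ∀ x, 0 ≤ W x)
    {g : X → ℝ} (hg0 : ∀ x, 0 ≤ g x) (hg : RuelleOp r W g = g) {x₀ : X} {U : Set X}
    (hU : U ∈ 𝓝 x₀) {t : ℝ} (ht : 0 ≤ t) (htg : ∀ z ∈ U, t ≤ g z) (x : X) :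
    ENNReal.ofReal t * P x (pathsTo r x₀ x) ≤ ENNReal.ofReal (g x) := by
  have hle : t • U.indicator 1 ≤ g := fun z => by
    by_cases hz : z ∈ U <;> simp [hz, htg, hg0]
  have hE : ∀ n, t * (P x).real {w | IsPathFrom r x w ∧ cons x w n ∈ U} ≤ g x := fun n =>
    calc t * (P x).real {w | IsPathFrom r x w ∧ cons x w n ∈ U}
        = (RuelleOp r W)^[n] (t • U.indicator 1) x := by
          rw [hP.measureReal_setOf_cons_mem hr hr_meas hr_fin hW,
            Function.Commute.iterate_left (ruelleOp_smul hr_fin t) n]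
          rfl
      _ ≤ (RuelleOp r W)^[n] g x := (ruelleOp_mono hr_fin hW).iterate n hle x
      _ = g x := by rw [Function.iterate_fixed hg]
  refine measure_le_of_eventually_mem (μ := ENNReal.ofReal t • P x)
    (E := fun n => {w | IsPathFrom r x w ∧ cons x w n ∈ U}) (fun w hw => ?_) fun n => ?_
  · exact ((tendsto_cons_iff.2 hw.2).eventually hU).mono fun n hn => ⟨hw.1, hn⟩
  · rw [Measure.smul_apply, smul_eq_mul, ← ofReal_measureReal, ← ENNReal.ofReal_mul ht]
    exact ENNReal.ofReal_le_ofReal (hE n)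

end PathsTo

theorem stmt16_general
    {X : Type*} [MetricSpace X] [CompactSpace X] [MeasurableSpace X] [BorelSpace X]
    (r : X → X) (hr_cont : Continuous r) (hr_surj : Function.Surjective r)
    (hr_fin : ∀ x : X, (r ⁻¹' {x}).Finite)
    (W : X → ℝ) (hW_nonneg : ∀ x, 0 ≤ W x)
    -- the family of Kolmogorov path-space measures `P_x`
    (P : X → Measure (ℕ → X)) (hP_prob : ∀ x, IsProbabilityMeasure (P x))
    (hP_cyl : ∀ (x : X) (z : ℕ → X) (n : ℕ), IsPathFrom r x z →
      P x (pathCylinder r x z n) = ∏ i ∈ Finset.range n, ENNReal.ofReal (W (z i)))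
    -- `x₀` is a fixed point of `r` with `W x₀ = 1`
    (x₀ : X) (hx₀ : r x₀ = x₀) (hWx₀ : W x₀ = 1) :
    -- with `h_{x₀}(x) := P_x(N_{x₀}(x))`:
    letI h : X → ℝ := fun x => (P x (pathsTo r x₀ x)).toReal
    -- (a) `h_{x₀}` is harmonic, `0 ≤ h_{x₀} ≤ 1`, and `h_{x₀}(x₀) = 1`
    (∀ x, RuelleOp r W h x = h x) ∧
    (∀ x, 0 ≤ h x ∧ h x ≤ 1) ∧
    h x₀ = 1 ∧
    -- (b) minimality of `h_{x₀}`
    (∀ g : X → ℝ, (∀ x, 0 ≤ g x) → (∀ x, RuelleOp r W g x = g x) →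
      g x₀ = 1 → ContinuousAt g x₀ → ∀ x, h x ≤ g x) := by
  have hP : PathSpace.IsPathMeasure r W P := hP_cyl
  have hr_meas := hr_cont.measurable
  refine ⟨congrFun (ruelleOp_measureReal_pathsTo hP hr_surj hr_meas hr_fin hW_nonneg x₀),
    fun x => ⟨measureReal_nonneg, measureReal_le_one⟩,
    measureReal_pathsTo_self hP hr_meas hr_fin hx₀ hWx₀, ?_⟩
  intro g hg0 hg hg1 hgc x
  refine ENNReal.toReal_le_of_le_ofReal (hg0 x) (ENNReal.le_of_forall_lt_one_mul_le fun a ha => ?_)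
  have ha_top : a ≠ ⊤ := ha.ne_top
  have hU : {z | a.toReal < g z} ∈ 𝓝 x₀ :=
    hgc.eventually (lt_mem_nhds (hg1 ▸ ENNReal.toReal_lt_of_lt_ofReal (by simpa using ha)))
  simpa [ENNReal.ofReal_toReal ha_top] using mul_measure_pathsTo_le hP hr_surj hr_meas hr_fin
    hW_nonneg hg0 (funext hg) hU ENNReal.toReal_nonneg (fun z hz => hz.le) x

theorem stmt16
    {X : Type*} [MetricSpace X] [CompactSpace X] [MeasurableSpace X] [BorelSpace X]
    (r : X → X) (hr_cont : Continuous r) (hr_surj : Function.Surjective r)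
    (hr_fin : ∀ x : X, (r ⁻¹' {x}).Finite)
    (W : X → ℝ) (hW_meas : Measurable W) (hW_nonneg : ∀ x, 0 ≤ W x)
    (hW1 : ∀ x : X, (∑ᶠ y ∈ r ⁻¹' {x}, W y) = 1)
    -- the family of Kolmogorov path-space measures `P_x`
    (P : X → Measure (ℕ → X)) (hP_prob : ∀ x, IsProbabilityMeasure (P x))
    (hP_cyl : ∀ (x : X) (z : ℕ → X) (n : ℕ), IsPathFrom r x z →
      P x (pathCylinder r x z n) = ∏ i ∈ Finset.range n, ENNReal.ofReal (W (z i)))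
    -- `x₀` is a fixed point of `r` with `W x₀ = 1`
    (x₀ : X) (hx₀ : r x₀ = x₀) (hWx₀ : W x₀ = 1) :
    -- with `h_{x₀}(x) := P_x(N_{x₀}(x))`:
    letI h : X → ℝ := fun x => (P x (pathsTo r x₀ x)).toReal
    -- (a) `h_{x₀}` is harmonic, `0 ≤ h_{x₀} ≤ 1`, and `h_{x₀}(x₀) = 1`
    (∀ x, RuelleOp r W h x = h x) ∧
    (∀ x, 0 ≤ h x ∧ h x ≤ 1) ∧
    h x₀ = 1 ∧
    -- (b) minimality of `h_{x₀}`
    (∀ g : X → ℝ, (∀ x, 0 ≤ g x) → (∀ x, RuelleOp r W g x = g x) →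
      g x₀ = 1 → ContinuousAt g x₀ → ∀ x, h x ≤ g x) :=
  stmt16_general r hr_cont hr_surj hr_fin W hW_nonneg P hP_prob hP_cyl x₀ hx₀ hWx₀
end

section
/- Let B and L be finite subsets of ℝ^d with #B = #L = N, let S be an invertible real d×d matrix, and suppose the N×N matrix (1/√N)(e^{2πi b·S⁻¹l})_{b∈B, l∈L} is unitary. Define m_B(x) = (1/√N) ∑_{b∈B} e^{2πi b·x}. Then ∑_{l∈L} |m_B(S⁻¹(x+l))|² = N for every x ∈ ℝ^d; equivalently, with W_B = |m_B|²/N and τ_l(x) = S⁻¹(x+l), one has ∑_{l∈L} W_B(τ_l x) = 1 for all x ∈ ℝ^d. -/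
open MeasureTheory Filter Topology Matrix Complex

/-! Put `v_b = e^{2πi b·S⁻¹x}`. Since `S⁻¹(x+l) = S⁻¹x + S⁻¹l`, the vector
`(m_B(S⁻¹(x+l)))_{l ∈ L}` is `v` multiplied by the matrix `H` of the hypothesis. As `H` is
square, `Hᴴ H = 1` gives `H Hᴴ = 1`, so multiplication by `H` preserves the `ℓ²`-norm, and
`‖v‖² = N` because every `v_b` has modulus one. -/

/-- `m_B(x) = (1/√N) ∑_{b ∈ B} e^{2πi b·x}`. -/
noncomputable def mB {d : ℕ} (B : Finset (Fin d → ℝ)) (x : Fin d → ℝ) : ℂ :=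
  (1 / Real.sqrt B.card : ℝ) *
    ∑ b ∈ B, Complex.exp (2 * Real.pi * Complex.I * (b ⬝ᵥ x : ℝ))

/-- The matrix `(1/√N)(e^{2πi b·S⁻¹l})_{b ∈ B, l ∈ L}`. -/
noncomputable def hadamardMatrix {d : ℕ} (B L : Finset (Fin d → ℝ)) (N : ℕ)
    (S : Matrix (Fin d) (Fin d) ℝ) : Matrix ↥B ↥L ℂ :=
  Matrix.of fun (b : ↥B) (l : ↥L) =>
    ((1 / Real.sqrt N : ℝ) : ℂ) *
      Complex.exp (2 * Real.pi * Complex.I *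
        ((b : Fin d → ℝ) ⬝ᵥ S⁻¹.mulVec (l : Fin d → ℝ) : ℝ))

namespace Matrix

theorem vecMul_dotProduct_star_of_mul_conjTranspose_eq_one {m n R : Type*} [Fintype m]
    [Fintype n] [DecidableEq m] [CommRing R] [StarRing R] {H : Matrix m n R}
    (hH : H * Hᴴ = 1) (v : m → R) :
    v ᵥ* H ⬝ᵥ star (v ᵥ* H) = v ⬝ᵥ star v := by
  rw [star_vecMul, dotProduct_mulVec, vecMul_vecMul, hH, vecMul_one]

theorem dotProduct_star_self_eq_sum_norm_sq {n 𝕜 : Type*} [Fintype n] [RCLike 𝕜] (v : n → 𝕜) :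
    v ⬝ᵥ star v = ((∑ i, ‖v i‖ ^ 2 : ℝ) : 𝕜) := by
  simp only [dotProduct, Pi.star_apply, RCLike.star_def, RCLike.mul_conj, RCLike.ofReal_sum,
    RCLike.ofReal_pow]

theorem sum_norm_sq_vecMul_of_mul_conjTranspose_eq_one {m n 𝕜 : Type*} [Fintype m]
    [Fintype n] [DecidableEq m] [RCLike 𝕜] {H : Matrix m n 𝕜} (hH : H * Hᴴ = 1)
    (v : m → 𝕜) :
    ∑ j, ‖(v ᵥ* H) j‖ ^ 2 = ∑ i, ‖v i‖ ^ 2 := by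
  have h := vecMul_dotProduct_star_of_mul_conjTranspose_eq_one hH v
  rwa [dotProduct_star_self_eq_sum_norm_sq, dotProduct_star_self_eq_sum_norm_sq,
    RCLike.ofReal_inj] at h

end Matrix

theorem norm_exp_two_pi_I_mul_ofReal (t : ℝ) :
    ‖Complex.exp (2 * Real.pi * Complex.I * t)‖ = 1 := by
  rw [show 2 * Real.pi * Complex.I * t = ((2 * Real.pi * t : ℝ) : ℂ) * Complex.I by
    push_cast; ring]
  exact Complex.norm_exp_ofReal_mul_I _

theorem mB_mulVec_add_eq_vecMul_hadamardMatrix {d : ℕ} {B L : Finset (Fin d → ℝ)} {N : ℕ}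
    (hB_card : B.card = N) (S : Matrix (Fin d) (Fin d) ℝ) (x : Fin d → ℝ) (l : ↥L) :
    mB B (S⁻¹ *ᵥ (x + l)) =
      ((fun b : ↥B => Complex.exp (2 * Real.pi * Complex.I * ((b : Fin d → ℝ) ⬝ᵥ S⁻¹ *ᵥ x : ℝ)))
        ᵥ* hadamardMatrix B L N S) l := by
  rw [vecMul, dotProduct]
  simp only [mB, hadamardMatrix, of_apply, hB_card, mulVec_add, dotProduct_add,
    Complex.ofReal_add, mul_add, Complex.exp_add, Finset.mul_sum]
  rw [← Finset.sum_coe_sort B]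
  exact Finset.sum_congr rfl fun _ _ => by ring

theorem stmt18_general
    {d : ℕ} (B L : Finset (Fin d → ℝ)) (N : ℕ) (hN : 0 < N)
    (hB_card : B.card = N) (hL_card : L.card = N)
    -- `S` is an invertible real `d × d` matrix
    (S : Matrix (Fin d) (Fin d) ℝ)
    -- the matrix `(1/√N)(e^{2πi b·S⁻¹l})_{b ∈ B, l ∈ L}` is unitary
    (hHada : (hadamardMatrix B L N S)ᴴ * hadamardMatrix B L N S = 1) :
    -- then `∑_{l ∈ L} |m_B(S⁻¹(x+l))|² = N`,
    (∀ x : Fin d → ℝ,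
      (∑ l ∈ L, ‖mB B (S⁻¹.mulVec (x + l))‖ ^ 2) = N) ∧
    -- equivalently `∑_{l ∈ L} W_B(τ_l x) = 1` with `W_B = |m_B|²/N`, `τ_l x = S⁻¹(x+l)`
    (∀ x : Fin d → ℝ,
      (∑ l ∈ L, ‖mB B (S⁻¹.mulVec (x + l))‖ ^ 2 / N) = 1) := by
  have hsquare : ↥L ≃ ↥B := Fintype.equivOfCardEq (by simp [hL_card, hB_card])
  have hHH := (mul_eq_one_comm_of_equiv hsquare).mp hHada
  have sum_eq_card (x : Fin d → ℝ) : ∑ l ∈ L, ‖mB B (S⁻¹ *ᵥ (x + l))‖ ^ 2 = N := by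
    rw [← Finset.sum_coe_sort L]
    simp only [mB_mulVec_add_eq_vecMul_hadamardMatrix hB_card,
      sum_norm_sq_vecMul_of_mul_conjTranspose_eq_one hHH, norm_exp_two_pi_I_mul_ofReal]
    simp [hB_card]
  refine ⟨sum_eq_card, fun x => ?_⟩
  rw [← Finset.sum_div, sum_eq_card x, div_self (by exact_mod_cast hN.ne')]

theorem stmt18
    {d : ℕ} (B L : Finset (Fin d → ℝ)) (N : ℕ) (hN : 0 < N)
    (hB_card : B.card = N) (hL_card : L.card = N)
    -- `S` is an invertible real `d × d` matrix
    (S : Matrix (Fin d) (Fin d) ℝ) (hS : IsUnit S.det)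
    -- the matrix `(1/√N)(e^{2πi b·S⁻¹l})_{b ∈ B, l ∈ L}` is unitary
    (hHada : (hadamardMatrix B L N S)ᴴ * hadamardMatrix B L N S = 1) :
    -- then `∑_{l ∈ L} |m_B(S⁻¹(x+l))|² = N`,
    (∀ x : Fin d → ℝ,
      (∑ l ∈ L, ‖mB B (S⁻¹.mulVec (x + l))‖ ^ 2) = N) ∧
    -- equivalently `∑_{l ∈ L} W_B(τ_l x) = 1` with `W_B = |m_B|²/N`, `τ_l x = S⁻¹(x+l)`
    (∀ x : Fin d → ℝ,
      (∑ l ∈ L, ‖mB B (S⁻¹.mulVec (x + l))‖ ^ 2 / N) = 1) :=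
  stmt18_general B L N hN hB_card hL_card S hHada
end
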